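/- arXiv:1803.07214 — 8 statements merged into one kernel-verified Lean document; each statement's English description precedes it below -/
import Mathlib

section
/- Let k be a field, and let P be a property of subsets of End_k(V) (one for each k-vector space V) that is inherited by quotients, i.e., whenever W ⊆ V are k-vector spaces and X ⊆ End_k(V) satisfies P and X(W) ⊆ W, the induced set X̄ ⊆ End_k(V/W) of maps v + W ↦ T(v) + W (T ∈ X) also satisfies P. Suppose that for every nonzero k-vector space V and every X ⊆ End_k(V) satisfying P there exists a 1-dimensional X-invariant subspace of V. Then for every k-vector space V, every subset of End_k(V) satisfying P is triangularizable. -/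
/-!
Build the triangularizing basis by transfinite recursion: having chosen vectors `v_β` for
`β < α` whose span `W_α` is `X`-invariant, if `W_α ≠ V` the induced set on the nonzero
space `V ⧸ W_α` still has the property, so it has an invariant line `k ∙ (v + W_α)`;
put `v_α := v`.
Then `W_α ⊔ k ∙ v_α` is again invariant, and since the `W_α` strictly increase while
`W_α ≠ V`, the process stops at some ordinal `δ` (there are only set-many subspaces). The
`v_β`, `β < δ`, are linearly independent (each lies outside the span of its predecessors),
span `V`, and `T v_α ∈ W_α ⊔ k ∙ v_α` is exactly triangularity.
-/

universe u

open Submodule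

section Independence

variable {k ι V : Type*} [Field k] [AddCommGroup V] [Module k V] [LinearOrder ι]

theorem linearIndepOn_of_notMem_span_image_Iio {v : ι → V} {s : Set ι}
    (h : ∀ i ∈ s, v i ∉ span k (v '' Set.Iio i)) : LinearIndepOn k v s := by
  classical
  refine linearIndepOn_iff_linearIndepOn_finset.2 fun t hts => ?_
  induction t using Finset.induction_on_max with
  | empty => simp
  | insert a t hlt ih =>
    rw [Finset.coe_insert] at hts ⊢
    have hat : a ∉ (t : Set ι) := fun ha => (hlt a ha).false
    refine (linearIndepOn_insert hat).2 ⟨ih ((Set.subset_insert _ _).trans hts), fun ha => ?_⟩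
    exact h a (hts (Set.mem_insert _ _)) (span_mono (Set.image_mono fun x hx => hlt x hx) ha)

end Independence

section Triangular

variable {k ι ι' V : Type*} [Field k] [AddCommGroup V] [Module k V]

def IsTriangular [Preorder ι] (X : Set (Module.End k V)) (b : Module.Basis ι k V) : Prop :=
  ∀ T ∈ X, ∀ i, T (b i) ∈ span k (b '' Set.Iic i)

theorem IsTriangular.reindex [Preorder ι] [Preorder ι'] {X : Set (Module.End k V)}
    {b : Module.Basis ι k V} (hb : IsTriangular X b) (e : ι ≃o ι') :
    IsTriangular X (b.reindex e.toEquiv) := by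
  intro T hT i
  have := hb T hT (e.symm i)
  rw [← e.symm.image_Iic] at this
  simpa [Set.image_comp] using this

end Triangular

section TransfiniteFlag

variable {k : Type*} {V : Type u} [Field k] [AddCommGroup V] [Module k V]

noncomputable def flagSeq (next : Submodule k V → V) (α : Ordinal.{u}) : V :=
  next (span k (Set.range fun β : Set.Iio α => flagSeq next β))
termination_by α
decreasing_by exact β.2

def flagStage (next : Submodule k V → V) (α : Ordinal.{u}) : Submodule k V :=
  span k (flagSeq next '' Set.Iio α)

variable (next : Submodule k V → V)

theorem flagSeq_eq (α : Ordinal.{u}) : flagSeq next α = next (flagStage next α) := by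
  rw [flagSeq, flagStage, Set.image_eq_range]

theorem flagStage_mono : Monotone (flagStage next) := fun _ _ h =>
  span_mono (Set.image_mono (Set.Iio_subset_Iio h))

theorem flagSeq_mem_flagStage {α β : Ordinal.{u}} (h : β < α) :
    flagSeq next β ∈ flagStage next α :=
  subset_span (Set.mem_image_of_mem _ h)

theorem flagStage_sup_span_flagSeq_le {α β : Ordinal.{u}} (h : β < α) :
    flagStage next β ⊔ k ∙ flagSeq next β ≤ flagStage next α :=
  sup_le (flagStage_mono next h.le)
    ((span_singleton_le_iff_mem _ _).2 (flagSeq_mem_flagStage next h))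

variable {X : Set (Module.End k V)}
  (hnext : ∀ W : Submodule k V, (∀ T ∈ X, ∀ w ∈ W, T w ∈ W) → W ≠ ⊤ →
    next W ∉ W ∧ ∀ T ∈ X, T (next W) ∈ W ⊔ k ∙ next W)
include hnext

theorem flagStage_invariant (α : Ordinal.{u}) :
    ∀ T ∈ X, ∀ w ∈ flagStage next α, T w ∈ flagStage next α := by
  induction α using WellFoundedLT.induction with
  | _ α ih =>
    intro T hT
    show flagStage next α ≤ (flagStage next α).comap T
    refine span_le.2 ?_
    rintro _ ⟨β, hβ, rfl⟩
    by_cases htop : flagStage next β = ⊤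
    · simp [top_le_iff.1 (htop ▸ flagStage_mono next (le_of_lt hβ))]
    · have := (hnext _ (ih β hβ) htop).2 T hT
      rw [← flagSeq_eq next β] at this
      exact flagStage_sup_span_flagSeq_le next hβ this

theorem flagSeq_notMem_flagStage {α : Ordinal.{u}} (h : flagStage next α ≠ ⊤) :
    flagSeq next α ∉ flagStage next α := by
  rw [flagSeq_eq]; exact (hnext _ (flagStage_invariant next hnext α) h).1

theorem exists_flagStage_eq_top : ∃ α, flagStage next α = ⊤ := by
  by_contra! h
  have : StrictMono (flagStage next) := fun a b hab =>
    (flagStage_mono next hab.le).lt_of_ne fun heq =>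
      flagSeq_notMem_flagStage next hnext (h a) (heq ▸ flagSeq_mem_flagStage next hab)
  exact not_small_ordinal.{u} (small_of_injective this.injective)

theorem exists_isTriangular_basis_Iio :
    ∃ δ : Ordinal.{u}, ∃ b : Module.Basis (Set.Iio δ) k V, IsTriangular X b := by
  obtain ⟨δ, hδ, hmin⟩ := wellFounded_lt.has_min _ (exists_flagStage_eq_top next hnext)
  have hne : ∀ β < δ, flagStage next β ≠ ⊤ := fun β hβ h => hmin β h hβ
  have hli : LinearIndependent k fun β : Set.Iio δ => flagSeq next β :=
    linearIndepOn_of_notMem_span_image_Iio fun β hβ =>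
      flagSeq_notMem_flagStage next hnext (hne β hβ)
  have hsp : ⊤ ≤ span k (Set.range fun β : Set.Iio δ => flagSeq next β) := by
    rw [← Set.image_eq_range, ← flagStage, hδ]
  refine ⟨δ, Module.Basis.mk hli hsp, fun T hT β => ?_⟩
  have hT := (hnext _ (flagStage_invariant next hnext β) (hne β β.2)).2 T hT
  rw [← flagSeq_eq next β] at hT
  rw [Module.Basis.coe_mk]
  refine (sup_le (span_le.2 ?_) ((span_singleton_le_iff_mem _ _).2 (subset_span ?_)) :
    _ ≤ span k _) hT
  · rintro _ ⟨γ, hγ, rfl⟩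
    exact subset_span
      ⟨⟨γ, Set.mem_Iio.2 (lt_trans hγ β.2)⟩, Set.mem_Iic.2 (le_of_lt hγ), rfl⟩
  · exact ⟨β, Set.mem_Iic.2 le_rfl, rfl⟩

end TransfiniteFlag

theorem exists_wellOrder_isTriangular {k : Type*} {V : Type u} [Field k] [AddCommGroup V]
    [Module k V] {X : Set (Module.End k V)}
    (hstep : ∀ W : Submodule k V, (∀ T ∈ X, ∀ w ∈ W, T w ∈ W) → W ≠ ⊤ →
      ∃ u ∉ W, ∀ T ∈ X, T u ∈ W ⊔ k ∙ u) :
    ∃ (ι : Type u) (lo : LinearOrder ι), WellFounded lo.lt ∧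
      ∃ b : Module.Basis ι k V, IsTriangular X b := by
  let next W := Classical.epsilon fun u => u ∉ W ∧ ∀ T ∈ X, T u ∈ W ⊔ k ∙ u
  obtain ⟨δ, b, hb⟩ := exists_isTriangular_basis_Iio next
    fun W hW hWtop => Classical.epsilon_spec (hstep W hW hWtop)
  exact ⟨δ.ToType, inferInstance, wellFounded_lt, _, hb.reindex Ordinal.ToType.mk⟩

theorem exists_notMem_mem_sup_span_of_quotient_line {k V : Type*} [Field k]
    [AddCommGroup V] [Module k V] {X : Set (Module.End k V)} {W : Submodule k V}
    (hW : ∀ T ∈ X, ∀ w ∈ W, T w ∈ W) {U : Submodule k (V ⧸ W)}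
    (hU : Module.finrank k U = 1)
    (hUX : ∀ S ∈ {S : Module.End k (V ⧸ W) | ∃ T ∈ X,
        ∀ v : V, S (Submodule.Quotient.mk v) = Submodule.Quotient.mk (T v)},
      ∀ x ∈ U, S x ∈ U) :
    ∃ u ∉ W, ∀ T ∈ X, T u ∈ W ⊔ k ∙ u := by
  obtain ⟨x, hxU, hx0⟩ := U.ne_bot_iff.1 (isAtom_iff_finrank_eq_one.2 hU).ne_bot
  obtain ⟨u, rfl⟩ := W.mkQ_surjective x
  have hU : U = k ∙ W.mkQ u := eq_span_singleton_of_mem_of_finrank_eq_one hU hxU hx0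
  refine ⟨u, fun hu => hx0 ((Quotient.mk_eq_zero W).2 hu), fun T hT => ?_⟩
  rw [← comap_map_mkQ, map_span, Set.image_singleton, ← hU]
  exact hUX (W.mapQ W T (hW T hT)) ⟨T, hT, fun v => rfl⟩ _ hxU

/-- Triangularization Lemma: if `P` is a property of subsets of `End_k(V)`
(one for each `k`-vector space `V`) that is inherited by quotients, and every subset
satisfying `P` of the endomorphism ring of a nonzero vector space admits a 1-dimensional
invariant subspace, then every subset satisfying `P` is triangularizable. -/
theorem stmt_1 {k : Type u} [Field k]
    (P : (V : Type u) → [inst : AddCommGroup V] → [inst2 : Module k V] →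
      Set (Module.End k V) → Prop)
    (hquot : ∀ (V : Type u) [AddCommGroup V] [Module k V]
      (X : Set (Module.End k V)) (W : Submodule k V), P V X →
      (∀ T ∈ X, ∀ w ∈ W, T w ∈ W) →
      P (V ⧸ W) {S : Module.End k (V ⧸ W) | ∃ T ∈ X,
        ∀ v : V, S (Submodule.Quotient.mk v) = Submodule.Quotient.mk (T v)})
    (hone : ∀ (V : Type u) [AddCommGroup V] [Module k V], Nontrivial V →
      ∀ X : Set (Module.End k V), P V X →
      ∃ U : Submodule k V, Module.finrank k ↥U = 1 ∧ ∀ T ∈ X, ∀ u ∈ U, T u ∈ U)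
    (V : Type u) [AddCommGroup V] [Module k V] (X : Set (Module.End k V)) (hX : P V X) :
    ∃ (ι : Type u) (lo : LinearOrder ι), WellFounded lo.lt ∧
      ∃ b : Module.Basis ι k V, ∀ T ∈ X, ∀ i : ι,
        T (b i) ∈ Submodule.span k (⇑b '' {j | lo.le j i}) := by
  refine exists_wellOrder_isTriangular fun W hW hWtop => ?_
  have : Nontrivial (V ⧸ W) := Quotient.nontrivial_iff.2 hWtop
  obtain ⟨U, hU, hUX⟩ := hone _ this _ (hquot V X W hX hW)
  exact exists_notMem_mem_sup_span_of_quotient_line hW hU hUX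
end

section
/- Let k be a field, V a nonzero k-vector space, and X a subset of End_k(V). Then X is triangularizable if and only if there exists a set U of X-invariant subspaces of V such that U is well-ordered by set inclusion and U is maximal among all subsets of the set of subspaces of V that are well-ordered by inclusion. -/
/-!
If `b` is a basis indexed by a well-order and every `T ∈ X` is triangular with respect to it,
the spans of `b` over the lower sets of the index form a well-ordered chain of `X`-invariant
subspaces. It is a maximal chain: every lower set is `univ` or some `Iio m`, and
`span (b '' Iio m) ⋖ span (b '' Iic m)` leaves no room for another subspace.

Conversely, a set of subspaces well-ordered by inclusion is maximal among such sets iff it is a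
maximal chain, since adding a comparable subspace keeps it well-ordered. In a well-ordered
maximal chain `U` every `W ≠ ⊤` is covered by its successor, which is `k ∙ x_W ⊔ W` for some
`x_W ∉ W`, and `U` is closed under suprema. This forces `W = span {x_{W'} | W' < W}` for all
`W ∈ U`, so the `x_W` form a basis, well-ordered by `W`, and `T x_W ∈ k ∙ x_W ⊔ W` makes it
triangular for every `T` leaving the members of `U` invariant.
-/

universe u v

variable {k : Type u} {V : Type v} [Field k] [AddCommGroup V] [Module k V]

/-- A set `U` of subspaces of `V` is well-ordered by set inclusion: it is totally ordered
by inclusion and every nonempty subset of `U` has a least element. -/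
def WellOrderedByInclusion (U : Set (Submodule k V)) : Prop :=
  (∀ W₁ ∈ U, ∀ W₂ ∈ U, W₁ ≤ W₂ ∨ W₂ ≤ W₁) ∧
    ∀ S ⊆ U, S.Nonempty → ∃ W ∈ S, ∀ W' ∈ S, W ≤ W'

open Set Submodule

theorem IsMaxChain.mem_of_forall_le_or_le {α : Type*} [Preorder α] {s : Set α} {a : α}
    (h : IsMaxChain (· ≤ ·) s) (ha : ∀ b ∈ s, a ≤ b ∨ b ≤ a) : a ∈ s :=
  (h.2 (h.1.insert fun b hb _ => ha b hb) (subset_insert a s)).symm ▸ mem_insert a s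

theorem IsMaxChain.sSup_mem {α : Type*} [CompleteLattice α] {s t : Set α}
    (h : IsMaxChain (· ≤ ·) s) (ht : t ⊆ s) : sSup t ∈ s := by
  refine h.mem_of_forall_le_or_le fun b hb => ?_
  by_cases hle : ∀ c ∈ t, c ≤ b
  · exact Or.inl (sSup_le hle)
  · push Not at hle
    obtain ⟨c, hct, hcb⟩ := hle
    exact Or.inr (((h.1.total hb (ht hct)).resolve_right hcb).trans (le_sSup hct))

theorem IsMaxChain.exists_covBy {α : Type*} [PartialOrder α] [OrderTop α] {s : Set α} {a : α}
    (h : IsMaxChain (· ≤ ·) s) (hwf : s.IsWF) (ha : a ∈ s) (ha_top : a ≠ ⊤) :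
    ∃ b ∈ s, a ⋖ b := by
  obtain ⟨b, hmin⟩ := (hwf.mono (sep_subset s (a < ·))).exists_minimal
    ⟨⊤, h.top_mem, lt_top_iff_ne_top.2 ha_top⟩
  obtain ⟨hbs, hab⟩ := hmin.prop
  refine ⟨b, hbs, hab, fun c hac hcb => ?_⟩
  have hcs : c ∈ s := h.mem_of_forall_le_or_le fun d hd => by
    rcases h.1.total hd ha with hda | had
    · exact Or.inr (hda.trans hac.le)
    rcases had.eq_or_lt with rfl | had
    · exact Or.inr hac.le
    rcases h.1.total hd hbs with hdb | hbd
    · exact Or.inl (hcb.le.trans (hmin.2 ⟨hd, had⟩ hdb))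
    · exact Or.inl (hcb.le.trans hbd)
  exact hmin.not_lt ⟨hcs, hac⟩ hcb

theorem wellOrderedByInclusion_iff {U : Set (Submodule k V)} :
    WellOrderedByInclusion U ↔ IsChain (· ≤ ·) U ∧ U.IsWF := by
  constructor
  · rintro ⟨htotal, hleast⟩
    refine ⟨fun W₁ h₁ W₂ h₂ _ => htotal W₁ h₁ W₂ h₂, ?_⟩
    refine WellFounded.wellFounded_iff_has_min.2 fun S hS => ?_
    obtain ⟨_, ⟨W, hW, rfl⟩, hleast⟩ :=
      hleast (Subtype.val '' S) (image_subset_iff.2 fun W _ => W.2) (hS.image _)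
    exact ⟨W, hW, fun W' hW' => not_lt_of_ge (hleast W' ⟨W', hW', rfl⟩)⟩
  · rintro ⟨hchain, hwf⟩
    refine ⟨fun W₁ h₁ W₂ h₂ => hchain.total h₁ h₂, fun S hS hne => ?_⟩
    obtain ⟨W, hW⟩ := (hwf.mono hS).exists_minimal hne
    exact ⟨W, hW.prop, fun W' hW' => (hchain.mono hS).le_of_not_gt hW' hW.prop (hW.not_lt hW')⟩

theorem WellOrderedByInclusion.isMaxChain_iff {U : Set (Submodule k V)}
    (hU : WellOrderedByInclusion U) :
    (∀ U' : Set (Submodule k V), WellOrderedByInclusion U' → U ⊆ U' → U' = U) ↔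
      IsMaxChain (· ≤ ·) U := by
  obtain ⟨hchain, hwf⟩ := wellOrderedByInclusion_iff.1 hU
  refine ⟨fun hmax => ⟨hchain, fun t ht hUt => hUt.antisymm fun Z hZ => ?_⟩,
    fun hmax U' hU' hUU' => (hmax.2 (wellOrderedByInclusion_iff.1 hU').1 hUU').symm⟩
  have hinsert : WellOrderedByInclusion (insert Z U) := wellOrderedByInclusion_iff.2
    ⟨hchain.insert fun W hW hne => ht hZ (hUt hW) hne, hwf.insert Z⟩
  exact hmax _ hinsert (subset_insert Z U) ▸ mem_insert Z U

theorem isPWO_setOf_isLowerSet {ι : Type*} [LinearOrder ι] [WellFoundedLT ι] :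
    {S : Set ι | IsLowerSet S}.IsPWO := by
  have hIio : (range (Iio : ι → Set ι)).IsPWO := by
    simpa only [image_univ] using (isWF_univ_iff.2 ‹_›).isPWO.image_of_monotone monotone_Iio
  refine (hIio.insert univ).mono fun S hS => ?_
  rcases hS.eq_univ_or_Iio with rfl | ⟨a, rfl⟩
  exacts [mem_insert _ _, mem_insert_of_mem _ (mem_range_self a)]

namespace Module.Basis

variable {ι : Type*} [LinearOrder ι] (b : Basis ι k V)

def lowerSetSpans : Set (Submodule k V) := (fun S => span k (b '' S)) '' {S | IsLowerSet S}

theorem wellOrderedByInclusion_lowerSetSpans [WellFoundedLT ι] :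
    WellOrderedByInclusion b.lowerSetSpans := by
  have hmono : Monotone fun S : Set ι => span k (b '' S) :=
    fun _ _ h => span_mono (image_mono h)
  have hchain : IsChain (· ≤ ·) {S : Set ι | IsLowerSet S} := fun S hS T hT _ => hS.total hT
  exact wellOrderedByInclusion_iff.2 ⟨hchain.image_of_map_rel _ _ _ fun _ _ h => hmono h,
    (isPWO_setOf_isLowerSet.image_of_monotone hmono).isWF⟩

theorem mem_lowerSetSpans_of_forall_le_or_le [WellFoundedLT ι] {Z : Submodule k V}
    (hZ : ∀ W ∈ b.lowerSetSpans, Z ≤ W ∨ W ≤ Z) : Z ∈ b.lowerSetSpans := by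
  have hZIic (j : ι) : Z ≤ span k (b '' Iic j) ∨ span k (b '' Iic j) ≤ Z :=
    hZ _ ⟨_, isLowerSet_Iic j, rfl⟩
  set S₀ := {i | b i ∈ Z}
  have hS₀ : IsLowerSet S₀ := fun i j hji hi => by
    rcases hZIic j with h | h
    · obtain rfl : i = j := le_antisymm (b.self_mem_span_image.1 (h hi) : i ∈ Iic j) hji
      exact hi
    · exact h (subset_span (mem_image_of_mem b le_rfl))
  have hS₀Z : span k (b '' S₀) ≤ Z := span_le.2 (image_subset_iff.2 fun _ => id)
  refine ⟨S₀, hS₀, hS₀Z.antisymm ?_⟩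
  rcases hS₀.eq_univ_or_Iio with hS₀univ | ⟨m, hS₀m⟩
  · rw [hS₀univ, image_univ, b.span_eq]
    exact le_top
  have hm : b m ∉ Z := fun hm => lt_irrefl m (hS₀m ▸ hm : m ∈ Iio m)
  have hcov : span k (b '' S₀) ⋖ span k (b '' Iic m) := by
    rw [← Iio_insert, image_insert_eq, span_insert, ← hS₀m]
    exact covBy_span_singleton_sup fun h => hm (hS₀Z h)
  have hZm : Z ≤ span k (b '' Iic m) :=
    (hZIic m).resolve_right fun h => hm (h (subset_span (mem_image_of_mem b le_rfl)))
  refine ((hcov.eq_or_eq hS₀Z hZm).resolve_right fun h => hm ?_).le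
  exact h ▸ subset_span (mem_image_of_mem b le_rfl)

theorem isMaxChain_lowerSetSpans [WellFoundedLT ι] : IsMaxChain (· ≤ ·) b.lowerSetSpans :=
  ⟨(wellOrderedByInclusion_iff.1 b.wellOrderedByInclusion_lowerSetSpans).1,
    fun _ ht hsub => hsub.antisymm fun _ hZ =>
      b.mem_lowerSetSpans_of_forall_le_or_le fun _ hW => ht.total hZ (hsub hW)⟩

theorem mem_invtSubmodule_of_mem_lowerSetSpans {T : Module.End k V}
    (hT : ∀ i, T (b i) ∈ span k (b '' Iic i)) {W : Submodule k V} (hW : W ∈ b.lowerSetSpans) :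
    W ∈ T.invtSubmodule := by
  obtain ⟨S, hS, rfl⟩ := hW
  exact span_le.2 <| image_subset_iff.2 fun j hj =>
    span_mono (image_mono fun i hi => hS hi hj) (hT j)

end Module.Basis

theorem linearIndependent_of_notMem_span_image_Iio {R M ι : Type*} [DivisionRing R]
    [AddCommGroup M] [Module R M] [LinearOrder ι] {f : ι → M}
    (hf : ∀ i, f i ∉ span R (f '' Iio i)) : LinearIndependent R f := by
  refine linearIndependent_iff.2 fun l hl => Finsupp.support_eq_empty.1 ?_
  by_contra hne
  set i := l.support.max' (Finset.nonempty_iff_ne_empty.2 hne)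
  have hi : i ∈ l.support := l.support.max'_mem _
  have hrest : ∑ j ∈ l.support.erase i, l j • f j ∈ span R (f '' Iio i) :=
    sum_mem fun j hj => smul_mem _ _ <| subset_span <| mem_image_of_mem f <|
      (l.support.le_max' j (Finset.mem_of_mem_erase hj)).lt_of_ne (Finset.ne_of_mem_erase hj)
  have hsum : l i • f i + ∑ j ∈ l.support.erase i, l j • f j = 0 := by
    rw [Finset.add_sum_erase _ (fun j => l j • f j) hi]
    simpa only [Finsupp.linearCombination_apply, Finsupp.sum] using hl
  apply hf i
  rw [← smul_mem_iff _ (Finsupp.mem_support_iff.1 hi), eq_neg_of_add_eq_zero_left hsum]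
  exact neg_mem hrest

theorem IsMaxChain.exists_notMem_sup_span_singleton_mem {U : Set (Submodule k V)}
    (hmax : IsMaxChain (· ≤ ·) U) (hwf : U.IsWF) {W : Submodule k V} (hW : W ∈ U)
    (hW_top : W ≠ ⊤) :
    ∃ x ∉ W, span k {x} ⊔ W ∈ U ∧ ∀ W' ∈ U, W < W' → x ∈ W' := by
  obtain ⟨S, hSU, hcov⟩ := hmax.exists_covBy hwf hW hW_top
  obtain ⟨x, hxS, hxW⟩ := SetLike.exists_of_lt hcov.lt
  have hS : span k {x} ⊔ W = S := by
    refine ((hcov.eq_or_eq le_sup_right ?_).resolve_left fun h => hxW ?_)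
    · exact sup_le ((span_singleton_le_iff_mem _ _).2 hxS) hcov.le
    · exact h ▸ mem_sup_left (mem_span_singleton_self x)
  refine ⟨x, hxW, hS ▸ hSU, fun W' hW' hWW' => ?_⟩
  rcases hmax.1.total hSU hW' with hSW' | hW'S
  · exact hSW' hxS
  · rcases hW'S.eq_or_lt with rfl | hW'S
    · exact hxS
    · exact (hcov.2 hWW' hW'S).elim

theorem IsMaxChain.le_span_image_lt {U : Set (Submodule k V)} (hmax : IsMaxChain (· ≤ ·) U)
    {f : Submodule k V → V} (hf : ∀ W ∈ U, W ≠ ⊤ → f W ∉ W ∧ span k {f W} ⊔ W ∈ U)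
    {W : Submodule k V} (hW : W ∈ U) : W ≤ span k (f '' {W' ∈ U | W' < W}) := by
  -- `M` is the largest member of `U` inside `P`, yet its successor `k ∙ f M ⊔ M` lies in `P` too.
  by_contra hWP
  set P := span k (f '' {W' ∈ U | W' < W})
  set M := sSup {W' ∈ U | W' ≤ P}
  have hMU : M ∈ U := hmax.sSup_mem (sep_subset _ _)
  have hMP : M ≤ P := sSup_le fun _ h => h.2
  have hMW : M < W :=
    ((hmax.1.total hMU hW).resolve_right fun h => hWP (h.trans hMP)).lt_of_ne
      fun h => hWP (h ▸ hMP)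
  obtain ⟨hfM, hsupU⟩ := hf M hMU (ne_top_of_lt hMW)
  have hsupP : span k {f M} ⊔ M ≤ P :=
    sup_le ((span_singleton_le_iff_mem _ _).2 (subset_span ⟨M, ⟨hMU, hMW⟩, rfl⟩)) hMP
  have hsupM : span k {f M} ⊔ M ≤ M := le_sSup (s := {W' ∈ U | W' ≤ P}) ⟨hsupU, hsupP⟩
  exact hfM (hsupM (mem_sup_left (mem_span_singleton_self _)))

theorem IsMaxChain.exists_adapted_basis {U : Set (Submodule k V)} (hmax : IsMaxChain (· ≤ ·) U)
    (hwf : U.IsWF) :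
    ∃ (ι : Type v) (lo : LinearOrder ι), WellFounded lo.lt ∧ ∃ b : Module.Basis ι k V,
      ∀ i, ∃ W ∈ U, b i ∈ W ∧ W ≤ span k (b '' {j | lo.le j i}) := by
  classical
  choose! f hf_notMem hf_supU hf_mem using
    fun W (hW : W ∈ U) hW_top => hmax.exists_notMem_sup_span_singleton_mem hwf hW hW_top
  let ι := ↥(U \ {⊤})
  let lo : LinearOrder ι := (hmax.1.mono sdiff_subset).linearOrder
  let g : ι → V := fun i => f i
  have hbelow (i : ι) : span k (g '' Iio i) ≤ i :=
    span_le.2 <| image_subset_iff.2 fun j hji => hf_mem j j.2.1 j.2.2 i i.2.1 hji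
  have habove {W : Submodule k V} (hW : W ∈ U) : W ≤ span k (g '' {i | i.1 < W}) := by
    have hf W (hW : W ∈ U) hW_top := And.intro (hf_notMem W hW hW_top) (hf_supU W hW hW_top)
    refine (hmax.le_span_image_lt hf hW).trans (span_mono ?_)
    rintro _ ⟨W', ⟨hW'U, hW'W⟩, rfl⟩
    exact ⟨⟨W', hW'U, ne_top_of_lt hW'W⟩, hW'W, rfl⟩
  have hli : LinearIndependent k g :=
    linearIndependent_of_notMem_span_image_Iio fun i h => hf_notMem i i.2.1 i.2.2 (hbelow i h)
  have hspan : ⊤ ≤ span k (range g) :=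
    (habove hmax.top_mem).trans (span_mono (image_subset_range _ _))
  refine ⟨ι, lo, hwf.mono sdiff_subset, .mk hli hspan, fun i => ?_⟩
  refine ⟨span k {g i} ⊔ i, hf_supU i i.2.1 i.2.2, ?_, ?_⟩
  · simpa using mem_sup_left (mem_span_singleton_self (g i))
  · rw [Module.Basis.coe_mk]
    refine sup_le ((span_singleton_le_iff_mem _ _).2 ?_) ?_
    · exact subset_span (mem_image_of_mem g (le_refl i))
    · exact (habove i.2.1).trans (span_mono (image_mono fun j (hj : j < i) => hj.le))

theorem stmt_2_general (X : Set (Module.End k V)) :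
    (∃ (ι : Type v) (lo : LinearOrder ι), WellFounded lo.lt ∧
      ∃ b : Module.Basis ι k V, ∀ T ∈ X, ∀ i : ι,
        T (b i) ∈ Submodule.span k (⇑b '' {j | lo.le j i})) ↔
    ∃ U : Set (Submodule k V),
      (∀ W ∈ U, ∀ T ∈ X, ∀ v ∈ W, T v ∈ W) ∧
      WellOrderedByInclusion U ∧
      ∀ U' : Set (Submodule k V), WellOrderedByInclusion U' → U ⊆ U' → U' = U := by
  constructor
  · rintro ⟨ι, lo, hwf, b, htri⟩
    have : WellFoundedLT ι := ⟨hwf⟩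
    have hU := b.wellOrderedByInclusion_lowerSetSpans
    exact ⟨b.lowerSetSpans, fun W hW T hT =>
      (b.mem_invtSubmodule_of_mem_lowerSetSpans (htri T hT) hW :), hU,
      hU.isMaxChain_iff.2 b.isMaxChain_lowerSetSpans⟩
  · rintro ⟨U, hinv, hU, hmax⟩
    obtain ⟨ι, lo, hwf, b, hb⟩ :=
      (hU.isMaxChain_iff.1 hmax).exists_adapted_basis (wellOrderedByInclusion_iff.1 hU).2
    refine ⟨ι, lo, hwf, b, fun T hT i => ?_⟩
    obtain ⟨W, hWU, hbW, hW⟩ := hb i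
    exact hW (hinv W hWU T hT _ hbW)

/-- `X ⊆ End_k(V)` is triangularizable iff there is a set of `X`-invariant
subspaces of `V` that is well-ordered by inclusion and maximal among all subsets of the set
of subspaces of `V` that are well-ordered by inclusion. -/
theorem stmt_2 [Nontrivial V] (X : Set (Module.End k V)) :
    (∃ (ι : Type v) (lo : LinearOrder ι), WellFounded lo.lt ∧
      ∃ b : Module.Basis ι k V, ∀ T ∈ X, ∀ i : ι,
        T (b i) ∈ Submodule.span k (⇑b '' {j | lo.le j i})) ↔
    ∃ U : Set (Submodule k V),
      (∀ W ∈ U, ∀ T ∈ X, ∀ v ∈ W, T v ∈ W) ∧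
      WellOrderedByInclusion U ∧
      ∀ U' : Set (Submodule k V), WellOrderedByInclusion U' → U ⊆ U' → U' = U :=
  stmt_2_general X
end

section
/- Let k be a field, V a nonzero k-vector space, and X a subset of End_k(V). Then X is strictly triangularizable if and only if X is topologically nilpotent. -/
/-!
For a sequence `f` in `X`, the vectors annihilated by some `Tₙ ⋯ T₁` form a subspace. If `X` is
strictly triangular for a well-founded basis, well-founded induction puts every basis vector in
it, because `T₁` moves `bᵢ` into the span of earlier basis vectors; a finite-dimensional subspace,
being a compact element of the subspace lattice, is then annihilated by a single `Tₙ ⋯ T₁`.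

Conversely, if `X` is topologically nilpotent, every proper subspace `U` contains `X w` for some
`w ∉ U`: otherwise one could pick `Tₙ ∈ X` keeping `Tₙ ⋯ T₁ w₀` outside `U` forever. Choosing such
vectors by transfinite recursion until they span `V` gives a well-ordered basis triangularizing `X`.
-/

universe u v

variable {k : Type u} [Field k]

/-- `seqProd f n = f (n-1) * ⋯ * f 1 * f 0`, the composition `Tₙ ⋯ T₂ T₁` of the first `n`
terms of the sequence `f` (and the identity for `n = 0`). -/
def seqProd {V : Type v} [AddCommGroup V] [Module k V]
    (f : ℕ → Module.End k V) : ℕ → Module.End k V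
  | 0 => 1
  | n + 1 => f n * seqProd f n

/-- A subset `X ⊆ End_k(V)` is topologically nilpotent if for every sequence of elements of
`X` and every finite-dimensional subspace `W` of `V`, some initial composition
`Tₙ ⋯ T₂ T₁` annihilates `W`. -/
def IsTopNilpotentSet {V : Type v} [AddCommGroup V] [Module k V]
    (X : Set (Module.End k V)) : Prop :=
  ∀ f : ℕ → Module.End k V, (∀ n, f n ∈ X) →
    ∀ W : Submodule k V, FiniteDimensional k ↥W →
      ∃ n : ℕ, 0 < n ∧ ∀ w ∈ W, seqProd f n w = 0

open Submodule Set

section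
variable {V : Type v} [AddCommGroup V] [Module k V]

theorem seqProd_succ_eq_shift_mul (f : ℕ → Module.End k V) (n : ℕ) :
    seqProd f (n + 1) = seqProd (fun m => f (m + 1)) n * f 0 := by
  induction n with
  | zero => simp [seqProd]
  | succ n ih => rw [seqProd, ih, seqProd, mul_assoc]

theorem monotone_ker_seqProd (f : ℕ → Module.End k V) :
    Monotone fun n => LinearMap.ker (seqProd f n) :=
  monotone_nat_of_le_succ fun n => LinearMap.ker_le_ker_comp (seqProd f n) (f n)

def killedBy (f : ℕ → Module.End k V) : Submodule k V :=
  ⨆ n, LinearMap.ker (seqProd f n)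

theorem mem_killedBy {f : ℕ → Module.End k V} {v : V} :
    v ∈ killedBy f ↔ ∃ n, seqProd f n v = 0 := by
  simp only [killedBy, mem_iSup_of_directed _ (monotone_ker_seqProd f).directed_le,
    LinearMap.mem_ker]

theorem mem_killedBy_of_apply_mem {f : ℕ → Module.End k V} {v : V}
    (h : f 0 v ∈ killedBy fun m => f (m + 1)) : v ∈ killedBy f := by
  obtain ⟨n, hn⟩ := mem_killedBy.1 h
  exact mem_killedBy.2 ⟨n + 1, by rw [seqProd_succ_eq_shift_mul]; exact hn⟩

theorem exists_le_ker_seqProd {f : ℕ → Module.End k V} {W : Submodule k V} (hW : W.FG)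
    (h : W ≤ killedBy f) : ∃ n, W ≤ LinearMap.ker (seqProd f n) := by
  obtain ⟨_, ⟨n, rfl⟩, hn⟩ := (CompleteLattice.isCompactElement_iff_le_of_directed_sSup_le _ W).1
    ((fg_iff_compact W).1 hW) _ (range_nonempty _)
    (monotone_ker_seqProd f).directed_le.directedOn_range (by rwa [sSup_range])
  exact ⟨n, hn⟩

theorem isTopNilpotentSet_iff_killedBy_eq_top {X : Set (Module.End k V)} :
    IsTopNilpotentSet X ↔ ∀ f : ℕ → Module.End k V, (∀ n, f n ∈ X) → killedBy f = ⊤ := by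
  constructor
  · refine fun hX f hf => eq_top_iff'.2 fun v => ?_
    obtain ⟨n, -, hn⟩ := hX f hf (span k {v}) inferInstance
    exact mem_killedBy.2 ⟨n, hn v (mem_span_singleton_self v)⟩
  · intro hX f hf W hW
    obtain ⟨n, hn⟩ := exists_le_ker_seqProd ((fg_iff_finiteDimensional W).2 hW)
      ((hX f hf).symm ▸ le_top)
    exact ⟨n + 1, n.succ_pos, fun w hw => monotone_ker_seqProd f n.le_succ (hn hw)⟩

theorem IsTopNilpotentSet.of_triangular {X : Set (Module.End k V)} {ι : Type*}
    {r : ι → ι → Prop} (hr : WellFounded r) {b : ι → V} (hb : span k (range b) = ⊤)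
    (hX : ∀ T ∈ X, ∀ i, T (b i) ∈ span k (b '' {j | r j i})) : IsTopNilpotentSet X := by
  rw [isTopNilpotentSet_iff_killedBy_eq_top]
  suffices h : ∀ i f, (∀ n, f n ∈ X) → b i ∈ killedBy f from
    fun f hf => eq_top_iff.2 (hb ▸ span_le.2 (range_subset_iff.2 fun i => h i f hf))
  intro i
  induction i using hr.induction with
  | _ i ih =>
    intro f hf
    refine mem_killedBy_of_apply_mem (span_le.2 ?_ (hX _ (hf 0) i))
    rintro _ ⟨j, hj, rfl⟩
    exact ih j hj _ fun n => hf (n + 1)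

theorem exists_notMem_forall_apply_mem {X : Set (Module.End k V)} (hX : IsTopNilpotentSet X)
    {U : Submodule k V} (hU : U ≠ ⊤) : ∃ w ∉ U, ∀ T ∈ X, T w ∈ U := by
  by_contra! h
  obtain ⟨v, -, hv⟩ := SetLike.exists_of_lt hU.lt_top
  choose! T hTX hTU using h
  let w : ℕ → V := fun n => (fun x => T x x)^[n] v
  have hw : ∀ n, w n ∉ U := by
    intro n
    induction n with
    | zero => exact hv
    | succ n ih => simpa only [w, Function.iterate_succ_apply'] using hTU _ ih
  have hseq : ∀ n, seqProd (fun n => T (w n)) n v = w n := by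
    intro n
    induction n with
    | zero => rfl
    | succ n ih => simp only [seqProd, Module.End.mul_apply, ih, w, Function.iterate_succ_apply']
  have hkilled := isTopNilpotentSet_iff_killedBy_eq_top.1 hX _ fun n => hTX _ (hw n)
  obtain ⟨n, hn⟩ := mem_killedBy.1 (hkilled ▸ mem_top : v ∈ killedBy _)
  exact hw n (hseq n ▸ hn ▸ U.zero_mem)

theorem linearIndependent_of_notMem_span_image_Iio_s4 {ι : Type*} [LinearOrder ι] {v : ι → V}
    (hv : ∀ i, v i ∉ span k (v '' Iio i)) : LinearIndependent k v := by
  rw [linearIndependent_iff]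
  intro l hl
  by_contra hl0
  have hsupp := Finsupp.support_nonempty_iff.2 hl0
  set m := l.support.max' hsupp
  have hm : l m ≠ 0 := Finsupp.mem_support_iff.1 (l.support.max'_mem hsupp)
  have hrest : Finsupp.linearCombination k v (l.erase m) ∈ span k (v '' Iio m) := by
    refine (Finsupp.mem_span_image_iff_linearCombination k).2 ⟨_, fun j hj => ?_, rfl⟩
    rw [Finset.mem_coe, Finsupp.support_erase, Finset.mem_erase] at hj
    exact lt_of_le_of_ne (l.support.le_max' j hj.2) hj.1
  rw [← Finsupp.single_add_erase m l, map_add, Finsupp.linearCombination_single] at hl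
  exact hv m ((smul_mem_iff _ hm).1 (eq_neg_of_add_eq_zero_left hl ▸ neg_mem hrest))

section greedy

variable (g : Submodule k V → V)

noncomputable def greedySeq : Ordinal.{v} → V :=
  Ordinal.lt_wf.fix fun o ih => g (span k (range fun p : Iio o => ih p p.2))

theorem greedySeq_eq (o : Ordinal.{v}) :
    greedySeq g o = g (span k (greedySeq g '' Iio o)) := by
  rw [image_eq_range]
  exact Ordinal.lt_wf.fix_eq _ o

variable {g}

theorem exists_span_greedySeq_eq_top (hg : ∀ U : Submodule k V, U ≠ ⊤ → g U ∉ U) :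
    ∃ o, span k (greedySeq g '' Iio o) = ⊤ := by
  by_contra! h
  refine not_injective_of_ordinal (greedySeq g) (.of_lt_imp_ne fun o o' hlt heq => ?_)
  have := hg _ (h o')
  rw [← greedySeq_eq g, ← heq] at this
  exact this (subset_span (mem_image_of_mem _ hlt))

end greedy

theorem exists_wellOrdered_basis_of_exists_notMem {P : Submodule k V → V → Prop}
    (hP : ∀ U : Submodule k V, U ≠ ⊤ → ∃ w ∉ U, P U w) :
    ∃ (ι : Type v) (_ : LinearOrder ι) (_ : WellFoundedLT ι) (b : Module.Basis ι k V),
      ∀ i, P (span k (b '' Iio i)) (b i) := by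
  choose! g hgU hgP using hP
  obtain ⟨o, ho⟩ := exists_span_greedySeq_eq_top hgU
  set S := {o | span k (greedySeq g '' Iio o) = ⊤}
  set O := sInf S
  have hO : O ∈ S := csInf_mem ⟨o, ho⟩
  -- `typein` embeds `O.ToType` as the initial segment `Iio O` of the ordinals.
  let e := Ordinal.typein (α := O.ToType) (· < ·)
  have he_top : e.top = O := Ordinal.type_toType O
  let c := greedySeq g ∘ e
  have hc : ∀ i, c i = g (span k (c '' Iio i)) := fun i => by
    rw [image_comp, e.image_Iio]
    exact greedySeq_eq g (e i)
  have hne_top : ∀ i, span k (c '' Iio i) ≠ ⊤ := fun i => by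
    rw [image_comp, e.image_Iio]
    exact notMem_of_lt_csInf' (s := S) ((e.lt_top i).trans_eq he_top)
  have hli : LinearIndependent k c :=
    linearIndependent_of_notMem_span_image_Iio_s4 fun i => hc i ▸ hgU _ (hne_top i)
  have hspan : ⊤ ≤ span k (range c) := by
    rw [range_comp, e.range_eq_Iio, he_top, hO]
  refine ⟨O.ToType, inferInstance, inferInstance, Module.Basis.mk hli hspan, fun i => ?_⟩
  simp only [Module.Basis.coe_mk]
  exact hc i ▸ hgP _ (hne_top i)

end

theorem stmt_4_general {V : Type v} [AddCommGroup V] [Module k V]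
    (X : Set (Module.End k V)) :
    (∃ (ι : Type v) (lo : LinearOrder ι), WellFounded lo.lt ∧
      ∃ b : Module.Basis ι k V, ∀ T ∈ X, ∀ i : ι,
        T (b i) ∈ Submodule.span k (⇑b '' {j | lo.lt j i})) ↔
    IsTopNilpotentSet X := by
  constructor
  · rintro ⟨ι, lo, hwf, b, hb⟩
    exact IsTopNilpotentSet.of_triangular hwf b.span_eq hb
  · intro hX
    obtain ⟨ι, lo, _, b, hb⟩ :=
      exists_wellOrdered_basis_of_exists_notMem fun U hU => exists_notMem_forall_apply_mem hX hU
    exact ⟨ι, lo, wellFounded_lt, b, fun T hT i => hb i T hT⟩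

/-- `X ⊆ End_k(V)` is strictly triangularizable iff it is topologically
nilpotent. -/
theorem stmt_4 {V : Type v} [AddCommGroup V] [Module k V] [Nontrivial V]
    (X : Set (Module.End k V)) :
    (∃ (ι : Type v) (lo : LinearOrder ι), WellFounded lo.lt ∧
      ∃ b : Module.Basis ι k V, ∀ T ∈ X, ∀ i : ι,
        T (b i) ∈ Submodule.span k (⇑b '' {j | lo.lt j i})) ↔
    IsTopNilpotentSet X :=
  stmt_4_general X
end

section
/- Let k be a field, V a nonzero k-vector space, and R a finite-dimensional nilpotent (nonunital) k-subalgebra of End_k(V) (i.e., Rⁿ = 0 for some positive integer n). Then R is strictly triangularizable. -/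
/-!
Let `V_j` be the subspace of vectors killed by every product of `j` elements of `R`. These form
an increasing chain from `V_0 = 0` to `V_n = V`, and each element of `R` maps `V_(j+1)` into
`V_j`. Extending a basis of `V_0` to one of `V_1`, then of `V_2`, and so on, gives a basis of `V`
adapted to the chain. Ordering it first by the least `j` with `b i ∈ V_j`, and then by an
arbitrary well order, makes every element of `R` strictly triangular.
-/

universe u v

open Submodule Set

section Filtration

variable {k : Type u} {V : Type v} [Field k] [AddCommGroup V] [Module k V]

theorem exists_linearIndepOn_adapted_to_filtration {U : ℕ → Submodule k V} (hU : Monotone U)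
    (j : ℕ) : ∃ s ⊆ (U j : Set V), LinearIndepOn k id s ∧ ∀ l < j, U l ≤ span k (s ∩ U l) := by
  induction j with
  | zero => exact ⟨∅, empty_subset _, linearIndepOn_empty k id, by simp⟩
  | succ j ih =>
    obtain ⟨s, hsU, hs, hspan⟩ := ih
    refine ⟨hs.extend hsU, (hs.extend_subset hsU).trans (hU j.le_succ),
      hs.linearIndepOn_extend hsU, fun l hl => ?_⟩
    rcases (Nat.lt_succ_iff.mp hl).lt_or_eq with hl | rfl
    · exact (hspan l hl).trans
        (span_mono (inter_subset_inter_left _ (hs.subset_extend hsU)))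
    · rw [inter_eq_left.mpr (hs.extend_subset hsU)]
      exact hs.subset_span_extend hsU

theorem exists_basis_adapted_to_filtration {U : ℕ → Submodule k V} (hU : Monotone U)
    (h0 : U 0 = ⊥) (n : ℕ) (hn : U n = ⊤) :
    ∃ (ι : Type v) (lo : LinearOrder ι), WellFounded lo.lt ∧ ∃ b : Module.Basis ι k V,
      ∀ i, ∃ j, b i ∈ U (j + 1) ∧ U j ≤ span k (b '' {i' | lo.lt i' i}) := by
  classical
  obtain ⟨s, -, hs, hspan⟩ := exists_linearIndepOn_adapted_to_filtration hU (n + 1)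
  have hs_top : ⊤ ≤ span k (range ((↑) : s → V)) := by
    rw [Subtype.range_coe, ← hn]
    exact (hspan n n.lt_succ_self).trans (span_mono inter_subset_left)
  let b := Module.Basis.mk hs hs_top
  have hb : ∀ i, b i = i := Module.Basis.mk_apply hs hs_top
  have hmem : ∀ v : V, ∃ j, v ∈ U j := fun v => ⟨n, hn ▸ mem_top⟩
  let level : V → ℕ := fun v => Nat.find (hmem v)
  obtain ⟨wo, hwo⟩ := exists_wellFoundedLT s
  let key : s → ℕ ×ₗ s := fun i => toLex (level i, i)
  have key_inj : key.Injective := fun i i' h => congrArg (fun p => (ofLex p).2) h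
  refine ⟨s, LinearOrder.lift' key key_inj,
    InvImage.wf key (WellFounded.prod_lex wellFounded_lt hwo.wf), b, fun i => ?_⟩
  have hlevel_pos : level i ≠ 0 := fun h => b.ne_zero i <| by
    have hi0 : (i : V) ∈ U (level i) := Nat.find_spec (hmem i)
    rwa [h, h0, mem_bot, ← hb] at hi0
  obtain ⟨j, hj⟩ : ∃ j, level i = j + 1 := Nat.exists_eq_add_one_of_ne_zero hlevel_pos
  have hi : b i ∈ U (j + 1) := by rw [hb, ← hj]; exact Nat.find_spec (hmem i)
  have hjn : j < n + 1 := by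
    have : level i ≤ n := Nat.find_min' (hmem i) (hn ▸ mem_top)
    omega
  refine ⟨j, hi, (hspan j hjn).trans (span_mono ?_)⟩
  rintro x ⟨hxs, hxU⟩
  refine ⟨⟨x, hxs⟩, Prod.Lex.left _ _ ?_, hb _⟩
  have : level x ≤ j := Nat.find_min' (hmem x) hxU
  change level x < level i
  omega

end Filtration

section KerPow

variable {k : Type u} {V : Type v} [Field k] [AddCommGroup V] [Module k V]

def kerPow (X : Set (Module.End k V)) (j : ℕ) : Submodule k V :=
  ⨅ (l : List (Module.End k V)) (_ : ∀ T ∈ l, T ∈ X) (_ : l.length = j), LinearMap.ker l.prod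

variable {X : Set (Module.End k V)}

theorem mem_kerPow {j : ℕ} {v : V} :
    v ∈ kerPow X j ↔
      ∀ l : List (Module.End k V), (∀ T ∈ l, T ∈ X) → l.length = j → l.prod v = 0 := by
  simp only [kerPow, mem_iInf, LinearMap.mem_ker]

theorem kerPow_zero : kerPow X 0 = ⊥ :=
  eq_bot_iff.mpr fun v hv => by simpa using mem_kerPow.mp hv [] (by simp) rfl

theorem kerPow_mono : Monotone (kerPow X) := by
  refine monotone_nat_of_le_succ fun j v hv => mem_kerPow.mpr fun l hl hlen => ?_
  obtain ⟨T, l, rfl⟩ := List.exists_cons_of_length_eq_add_one hlen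
  have hl' : ∀ S ∈ l, S ∈ X := fun S hS => hl S (List.mem_cons_of_mem T hS)
  rw [List.prod_cons, Module.End.mul_apply, mem_kerPow.mp hv l hl' (by simpa using hlen), map_zero]

theorem apply_mem_kerPow {T : Module.End k V} (hT : T ∈ X) {j : ℕ} {v : V}
    (hv : v ∈ kerPow X (j + 1)) : T v ∈ kerPow X j := by
  refine mem_kerPow.mpr fun l hl hlen => ?_
  have := mem_kerPow.mp hv (l ++ [T]) (by simpa [or_imp, forall_and] using ⟨hl, hT⟩) (by simpa)
  rwa [List.prod_append, List.prod_singleton, Module.End.mul_apply] at this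

theorem kerPow_eq_top {n : ℕ}
    (hnil : ∀ l : List (Module.End k V), (∀ T ∈ l, T ∈ X) → l.length = n → l.prod = 0) :
    kerPow X n = ⊤ :=
  eq_top_iff.mpr fun v _ => mem_kerPow.mpr fun l hl hlen => by
    rw [hnil l hl hlen, LinearMap.zero_apply]

end KerPow

theorem stmt_5_general {k : Type u} {V : Type v} [Field k] [AddCommGroup V] [Module k V]
    (R : NonUnitalSubalgebra k (Module.End k V))
    (n : ℕ)
    (hnil : ∀ l : List (Module.End k V), (∀ x ∈ l, x ∈ R) → l.length = n → l.prod = 0) :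
    ∃ (ι : Type v) (lo : LinearOrder ι), WellFounded lo.lt ∧
      ∃ b : Module.Basis ι k V, ∀ T ∈ (R : Set (Module.End k V)), ∀ i : ι,
        T (b i) ∈ Submodule.span k (⇑b '' {j | lo.lt j i}) := by
  obtain ⟨ι, lo, hwf, b, hb⟩ :=
    exists_basis_adapted_to_filtration kerPow_mono kerPow_zero n (kerPow_eq_top hnil)
  refine ⟨ι, lo, hwf, b, fun T hT i => ?_⟩
  obtain ⟨j, hbi, hspan⟩ := hb i
  exact hspan (apply_mem_kerPow hT hbi)

/-- Chebotar: a finite-dimensional nilpotent nonunital `k`-subalgebra of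
`End_k(V)` is strictly triangularizable. -/
theorem stmt_5 {k : Type u} {V : Type v} [Field k] [AddCommGroup V] [Module k V]
    [Nontrivial V]
    (R : NonUnitalSubalgebra k (Module.End k V)) [Module.Finite k ↥R]
    (n : ℕ) (hn : 0 < n)
    (hnil : ∀ l : List (Module.End k V), (∀ x ∈ l, x ∈ R) → l.length = n → l.prod = 0) :
    ∃ (ι : Type v) (lo : LinearOrder ι), WellFounded lo.lt ∧
      ∃ b : Module.Basis ι k V, ∀ T ∈ (R : Set (Module.End k V)), ∀ i : ι,
        T (b i) ∈ Submodule.span k (⇑b '' {j | lo.lt j i}) :=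
  stmt_5_general R n hnil
end

section
/- Let k be a field, n a positive integer, and X a multiplicative subsemigroup of the matrix ring M_n(k) that is nilpotent, i.e., there is a positive integer m such that every product of m elements of X is the zero matrix. Then X is triangularizable: there is a basis of kⁿ with respect to which every element of X is upper triangular (in fact strictly upper triangular). -/
/-!
Let `F j` be the subspace killed by every product of `j` elements of `X`. Then `F 0 = 0`,
`F m` is everything by nilpotency, the `F j` increase, and each `T ∈ X` maps `F (j + 1)` into
`F j`. Extending bases of `F 0 ⊆ F 1 ⊆ ⋯` step by step and ordering the basis vectors by the
first `F j` they lie in makes every `T ∈ X` strictly upper triangular.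
-/

open Module Submodule

section

variable {k V : Type*} [Field k] [AddCommGroup V] [Module k V]

theorem exists_linearIndepOn_adapted_to_chain {F : ℕ → Submodule k V} (hF : Monotone F) (N : ℕ) :
    ∃ s : Set V, LinearIndepOn k id s ∧ s ⊆ F N ∧ ∀ j ≤ N, F j ≤ span k (s ∩ F j) := by
  induction N with
  | zero =>
    obtain ⟨s, hsF, -, hFs, hs⟩ :=
      exists_linearIndepOn_id_extension (linearIndepOn_empty k id) (Set.empty_subset (F 0 : Set V))
    refine ⟨s, hs, hsF, fun j hj => ?_⟩
    rw [Nat.le_zero.mp hj, Set.inter_eq_left.mpr hsF]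
    exact hFs
  | succ N ih =>
    obtain ⟨s, hs, hsF, hFs⟩ := ih
    obtain ⟨t, htF, hst, hFt, ht⟩ :=
      exists_linearIndepOn_id_extension hs (hsF.trans (hF N.le_succ))
    refine ⟨t, ht, htF, fun j hj => ?_⟩
    rcases hj.lt_or_eq with hj | rfl
    · exact (hFs j (Nat.lt_succ_iff.mp hj)).trans
        (span_mono (Set.inter_subset_inter_left _ hst))
    · rw [Set.inter_eq_left.mpr htF]
      exact hFt

theorem exists_basis_adapted_to_chain [FiniteDimensional k V] {n : ℕ} (hn : finrank k V = n)
    {F : ℕ → Submodule k V} (hF : Monotone F) {N : ℕ} (hN : F N = ⊤) :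
    ∃ (b : Basis (Fin n) k V) (ℓ : Fin n → ℕ), Monotone ℓ ∧ (∀ i, b i ∈ F (ℓ i)) ∧
      ∀ j, F j ≤ span k (b '' {i | ℓ i ≤ j}) := by
  obtain ⟨s, hs, hsF, hFs⟩ := exists_linearIndepOn_adapted_to_chain hF N
  have hFs' (j : ℕ) : F j ≤ span k (s ∩ F j) := by
    rcases le_total j N with hj | hj
    · exact hFs j hj
    · calc F j ≤ F N := hN ▸ le_top
        _ ≤ span k (s ∩ F N) := hFs N le_rfl
        _ ≤ span k (s ∩ F j) := span_mono (Set.inter_subset_inter_right s (hF hj))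
  have hspan : ⊤ ≤ span k (Set.range ((↑) : s → V)) := by
    rw [Subtype.range_coe, ← hN]
    exact (hFs' N).trans (span_mono Set.inter_subset_left)
  let b₀ : Basis s k V := Basis.mk hs hspan
  have : Finite s := Module.Finite.finite_basis b₀
  have : Fintype s := Fintype.ofFinite s
  let level : V → ℕ := fun v => sInf {j | v ∈ F j}
  have mem_level {v : V} (hv : v ∈ s) : v ∈ F (level v) :=
    Nat.sInf_mem (s := {j | v ∈ F j}) ⟨N, hsF hv⟩
  let e₀ : s ≃ Fin n := Fintype.equivFinOfCardEq (hn ▸ (finrank_eq_card_basis b₀).symm)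
  let f : Fin n → ℕ := fun i => level (e₀.symm i)
  let σ := Tuple.sort f
  refine ⟨b₀.reindex (e₀.trans σ.symm), f ∘ σ, Tuple.monotone_sort f, fun i => ?_, fun j => ?_⟩
  · simpa [b₀] using mem_level (e₀.symm (σ i)).2
  · refine (hFs' j).trans (span_mono ?_)
    rintro v ⟨hvs, hvF⟩
    refine ⟨σ.symm (e₀ ⟨v, hvs⟩), ?_, ?_⟩
    · simpa [f] using Nat.sInf_le hvF
    · simp [b₀]

theorem Module.Basis.apply_mem_span_image_lt {ι : Type*} [LinearOrder ι] (b : Basis ι k V)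
    {F : ℕ → Submodule k V} (hF₀ : F 0 = ⊥) {ℓ : ι → ℕ} (hℓ : Monotone ℓ)
    (hbF : ∀ i, b i ∈ F (ℓ i)) (hFb : ∀ j, F j ≤ span k (b '' {i | ℓ i ≤ j}))
    {f : V →ₗ[k] V} (hf : ∀ j, ∀ v ∈ F (j + 1), f v ∈ F j) (i : ι) :
    f (b i) ∈ span k (b '' {i' | i' < i}) := by
  obtain ⟨j, hj⟩ : ∃ j, ℓ i = j + 1 := by
    refine Nat.exists_eq_succ_of_ne_zero fun h => b.ne_zero i ?_
    simpa [h, hF₀] using hbF i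
  refine span_mono (Set.image_mono fun i' (hi' : ℓ i' ≤ j) => ?_) (hFb j (hf j _ (hj ▸ hbF i)))
  exact hℓ.reflect_lt (by omega)

def productKernel (X : Set (Module.End k V)) (j : ℕ) : Submodule k V :=
  ⨅ (l : List (Module.End k V)) (_ : (∀ f ∈ l, f ∈ X) ∧ l.length = j), LinearMap.ker l.prod

variable {X : Set (Module.End k V)}

theorem mem_productKernel {j : ℕ} {v : V} :
    v ∈ productKernel X j ↔ ∀ l : List (Module.End k V), (∀ f ∈ l, f ∈ X) → l.length = j →
      l.prod v = 0 := by
  simp [productKernel, mem_iInf]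

theorem productKernel_zero : productKernel X 0 = ⊥ :=
  eq_bot_iff.mpr fun v hv => by simpa using mem_productKernel.mp hv [] (by simp) rfl

theorem productKernel_mono : Monotone (productKernel X) := by
  refine monotone_nat_of_le_succ fun j v hv => mem_productKernel.mpr ?_
  rintro (_ | ⟨f, l⟩) hl hlen
  · simp at hlen
  · have hl' : ∀ g ∈ l, g ∈ X := fun g hg => hl g (List.mem_cons_of_mem f hg)
    rw [List.prod_cons, Module.End.mul_apply,
      mem_productKernel.mp hv l hl' (by simpa using hlen), map_zero]

theorem productKernel_eq_top {m : ℕ}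
    (hX : ∀ l : List (Module.End k V), (∀ f ∈ l, f ∈ X) → l.length = m → l.prod = 0) :
    productKernel X m = ⊤ :=
  eq_top_iff.mpr fun v _ => mem_productKernel.mpr fun l hl hlen => by simp [hX l hl hlen]

theorem apply_mem_productKernel {f : Module.End k V} (hf : f ∈ X) {j : ℕ} {v : V}
    (hv : v ∈ productKernel X (j + 1)) : f v ∈ productKernel X j := by
  refine mem_productKernel.mpr fun l hl hlen => ?_
  have := mem_productKernel.mp hv (l ++ [f]) (by simpa [or_imp, forall_and] using ⟨hl, hf⟩)
    (by simp [hlen])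
  simpa using this

theorem Module.End.exists_basis_apply_mem_span_image_lt [FiniteDimensional k V] {n : ℕ}
    (hn : finrank k V = n) {m : ℕ}
    (hX : ∀ l : List (Module.End k V), (∀ f ∈ l, f ∈ X) → l.length = m → l.prod = 0) :
    ∃ b : Basis (Fin n) k V, ∀ f ∈ X, ∀ i, f (b i) ∈ span k (b '' {i' | i' < i}) := by
  obtain ⟨b, ℓ, hℓ, hbF, hFb⟩ :=
    exists_basis_adapted_to_chain hn productKernel_mono (productKernel_eq_top hX)
  exact ⟨b, fun f hf => b.apply_mem_span_image_lt productKernel_zero hℓ hbF hFb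
    fun _ _ => apply_mem_productKernel hf⟩

end

theorem stmt_6_general {k : Type*} [Field k] {n : ℕ}
    (X : Set (Matrix (Fin n) (Fin n) k))
    (m : ℕ)
    (hnil : ∀ l : List (Matrix (Fin n) (Fin n) k),
      (∀ A ∈ l, A ∈ X) → l.length = m → l.prod = 0) :
    ∃ b : Module.Basis (Fin n) k (Fin n → k),
      (∀ T ∈ X, ∀ i : Fin n,
        Matrix.toLin' T (b i) ∈ Submodule.span k (⇑b '' {j | j ≤ i})) ∧
      (∀ T ∈ X, ∀ i : Fin n,
        Matrix.toLin' T (b i) ∈ Submodule.span k (⇑b '' {j | j < i})) := by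
  have hnil' : ∀ l : List (Module.End k (Fin n → k)),
      (∀ f ∈ l, f ∈ LinearMap.toMatrixAlgEquiv' ⁻¹' X) → l.length = m → l.prod = 0 := by
    intro l hl hlen
    rw [← map_eq_zero_iff _ LinearMap.toMatrixAlgEquiv'.injective, map_list_prod]
    exact hnil _ (by simpa using hl) (by simpa using hlen)
  obtain ⟨b, hb⟩ := Module.End.exists_basis_apply_mem_span_image_lt (finrank_fin_fun k) hnil'
  have strict : ∀ T ∈ X, ∀ i, Matrix.toLin' T (b i) ∈ span k (b '' {j | j < i}) :=
    fun T hT => hb _ (show LinearMap.toMatrix' (Matrix.toLin' T) ∈ X by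
      rwa [LinearMap.toMatrix'_toLin'])
  exact ⟨b, fun T hT i => span_mono (Set.image_mono fun _ (h : _ < i) => h.le) (strict T hT i),
    strict⟩

/-- Levitzki: a nilpotent multiplicative subsemigroup `X` of `M_n(k)` is
triangularizable: there is a basis of `kⁿ` with respect to which every element of `X` is
upper triangular (in fact strictly upper triangular). -/
theorem stmt_6 {k : Type*} [Field k] {n : ℕ} (hn : 0 < n)
    (X : Set (Matrix (Fin n) (Fin n) k))
    (hmul : ∀ A ∈ X, ∀ B ∈ X, A * B ∈ X)
    (m : ℕ) (hm : 0 < m)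
    (hnil : ∀ l : List (Matrix (Fin n) (Fin n) k),
      (∀ A ∈ l, A ∈ X) → l.length = m → l.prod = 0) :
    ∃ b : Module.Basis (Fin n) k (Fin n → k),
      (∀ T ∈ X, ∀ i : Fin n,
        Matrix.toLin' T (b i) ∈ Submodule.span k (⇑b '' {j | j ≤ i})) ∧
      (∀ T ∈ X, ∀ i : Fin n,
        Matrix.toLin' T (b i) ∈ Submodule.span k (⇑b '' {j | j < i})) :=
  stmt_6_general X m hnil
end

section
/- Let k be a field, V a nonzero k-vector space, R a subring of End_k(V) (containing the identity) that is closed in the function topology, and J a left ideal (or a right ideal) of R. If every element of J is topologically nilpotent, then J is contained in the Jacobson radical rad(R) of R. -/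
/-- The function (finite/pointwise) topology on `End_k(V)`: the topology induced from the
product topology on `V → V` where `V` carries the discrete topology. -/
instance endFunctionTopology {k V : Type*} [Field k] [AddCommGroup V] [Module k V] :
    TopologicalSpace (Module.End k V) :=
  TopologicalSpace.induced (fun T => (T : V → V))
    (@Pi.topologicalSpace V (fun _ => V) (fun _ => ⊥))

/-- if `R` is a unital subring of `End_k(V)` closed in the function topology
and `J` is a left ideal of `R` all of whose elements are topologically nilpotent, then
`J` is contained in the Jacobson radical of `R` (the intersection of the maximal left
ideals, i.e. `Ideal.jacobson ⊥`). -/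
theorem stmt_8 {k V : Type*} [Field k] [AddCommGroup V] [Module k V] [Nontrivial V]
    (R : Subring (Module.End k V))
    (hclosed : IsClosed (R : Set (Module.End k V)))
    (J : Ideal R)
    (hJ : ∀ T ∈ J, ∀ v : V, ∃ m : ℕ, 0 < m ∧ ((T : Module.End k V) ^ m) v = 0) :
    J ≤ Ideal.jacobson (⊥ : Ideal R) := by
  -- Key step: for every topologically nilpotent `y ∈ R`, `1 - y` is a unit of `R`.
  have key : ∀ y : R, (∀ v : V, ∃ m : ℕ, 0 < m ∧ ((y : Module.End k V) ^ m) v = 0) →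
      IsUnit ((1 : R) - y) := by
    intro y hy
    set T : Module.End k V := (y : Module.End k V) with hTdef
    -- injectivity of 1 - T
    have hinj : Function.Injective ⇑((1 : Module.End k V) - T) := by
      rw [← LinearMap.ker_eq_bot, LinearMap.ker_eq_bot']
      intro u hu
      have hTu : T u = u := by
        have h1 : u - T u = 0 := by
          simpa [LinearMap.sub_apply] using congrArg (fun f => f) hu
        have := sub_eq_zero.mp h1
        exact this.symm
      have hpow : ∀ n : ℕ, (T ^ n) u = u := by
        intro n
        induction n with
        | zero => simp
        | succ n ih =>
          rw [pow_succ', Module.End.mul_apply, ih, hTu]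
      obtain ⟨m, hm, h0⟩ := hy u
      rw [hpow m] at h0
      exact h0
    have hsurj : Function.Surjective ⇑((1 : Module.End k V) - T) := by
      intro w
      obtain ⟨m, hm, hw⟩ := hy w
      refine ⟨∑ i ∈ Finset.range m, (T ^ i) w, ?_⟩
      have h1 : ((1 : Module.End k V) - T) (∑ i ∈ Finset.range m, (T ^ i) w)
          = ∑ i ∈ Finset.range m, ((T ^ i) w - (T ^ (i + 1)) w) := by
        rw [map_sum]
        refine Finset.sum_congr rfl fun i _ => ?_
        simp [LinearMap.sub_apply, pow_succ', Module.End.mul_apply]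
      rw [h1, Finset.sum_range_sub' (fun i => (T ^ i) w), hw]
      simp
    -- the inverse endomorphism
    let e : V ≃ₗ[k] V := LinearEquiv.ofBijective ((1 : Module.End k V) - T) ⟨hinj, hsurj⟩
    set S : Module.End k V := (e.symm : V →ₗ[k] V) with hSdef
    have hright : ((1 : Module.End k V) - T) * S = 1 := by
      apply LinearMap.ext
      intro v
      exact e.apply_symm_apply v
    have hleft : S * ((1 : Module.End k V) - T) = 1 := by
      apply LinearMap.ext
      intro v
      exact e.symm_apply_apply v
    -- agreement of partial sums with S
    have hagree : ∀ (N : ℕ) (v : V), (T ^ N) v = 0 →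
        ((∑ i ∈ Finset.range N, T ^ i) : Module.End k V) v = S v := by
      intro N v h0
      apply hinj
      have h1 : ((1 : Module.End k V) - T) (((∑ i ∈ Finset.range N, T ^ i) : Module.End k V) v)
          = v := by
        have h2 : ((1 : Module.End k V) - T) (((∑ i ∈ Finset.range N, T ^ i) : Module.End k V) v)
            = ∑ i ∈ Finset.range N, ((T ^ i) v - (T ^ (i + 1)) v) := by
          rw [LinearMap.sum_apply, map_sum]
          refine Finset.sum_congr rfl fun i _ => ?_
          simp [LinearMap.sub_apply, pow_succ', Module.End.mul_apply]
        rw [h2, Finset.sum_range_sub' (fun i => (T ^ i) v), h0]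
        simp
      have h3 : ((1 : Module.End k V) - T) (S v) = v := by
        exact e.apply_symm_apply v
      rw [h1, h3]
    -- S lies in the closure of R, hence in R
    have hSR : S ∈ R := by
      have hcl : S ∈ closure (R : Set (Module.End k V)) := by
        letI : TopologicalSpace V := ⊥
        rw [mem_closure_iff]
        intro o ho hSo
        obtain ⟨U, hU, rfl⟩ := isOpen_induced_iff.mp ho
        obtain ⟨I, u, hu, hsub⟩ := isOpen_pi_iff.mp hU _ hSo
        choose g hgpos hg using hy
        set N : ℕ := I.sup g with hNdef
        have hzero : ∀ v ∈ I, (T ^ N) v = 0 := by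
          intro v hv
          have hle : g v ≤ N := Finset.le_sup hv
          have : T ^ N = T ^ (N - g v) * T ^ (g v) := by
            rw [← pow_add, Nat.sub_add_cancel hle]
          rw [this, Module.End.mul_apply, hg v, map_zero]
        refine ⟨(∑ i ∈ Finset.range N, T ^ i : Module.End k V), ?_, ?_⟩
        · apply hsub
          rw [Set.mem_pi]
          intro v hv
          show ((∑ i ∈ Finset.range N, T ^ i : Module.End k V)) v ∈ u v
          rw [hagree N v (hzero v hv)]
          exact (hu v hv).2
        · exact sum_mem fun i _ => pow_mem y.2 i
      rwa [hclosed.closure_eq] at hcl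
    refine ⟨⟨(1 : R) - y, ⟨S, hSR⟩, ?_, ?_⟩, rfl⟩
    · exact Subtype.ext (by push_cast; exact hright)
    · exact Subtype.ext (by push_cast; exact hleft)
  -- Now the ideal-theoretic argument.
  intro x hx
  rw [Ideal.jacobson, Ideal.mem_sInf]
  rintro M ⟨-, hM⟩
  by_contra hxM
  have hsup : M ⊔ Ideal.span {x} = ⊤ := by
    refine hM.1.2 _ ?_
    refine lt_of_le_of_ne le_sup_left ?_
    intro hEq
    apply hxM
    rw [hEq]
    exact Submodule.mem_sup_right (Ideal.subset_span rfl)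
  have h1 : (1 : R) ∈ M ⊔ Ideal.span {x} := by rw [hsup]; trivial
  obtain ⟨m, hm, z, hz, hmz⟩ := Submodule.mem_sup.mp h1
  obtain ⟨r, hr⟩ := Submodule.mem_span_singleton.mp hz
  have hrx : r * x ∈ J := J.mul_mem_left r hx
  have hunit : IsUnit ((1 : R) - r * x) := key _ (hJ _ hrx)
  have hmeq : m = (1 : R) - r * x := by
    have : m + r * x = 1 := by rw [← smul_eq_mul, hr]; exact hmz
    exact (eq_sub_of_add_eq this)
  rw [hmeq] at hm
  exact hM.ne_top (M.eq_top_of_isUnit_mem hm hunit)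
end

section
/- Let k be a field, V a nonzero k-vector space, and R a subring of End_k(V) (containing the identity) that is triangular with respect to a well-ordered basis (B, ≤) of V. Then TNil(R), the set of topologically nilpotent elements of R, consists precisely of those transformations in R that are strictly triangular with respect to (B, ≤), and TNil(R) is a two-sided ideal of R. -/
/-!
For a triangular `T`, the `i`-th coordinate is multiplicative on `span {b j | j ≤ i}`, so the
diagonal entry of `T ^ m` at `i` is the `m`-th power of that of `T`; if `T ^ m` kills `b i`, the
diagonal entry vanishes and `T` is strictly triangular there. Conversely a strictly triangular
map kills every `b i` by well-founded induction on `i`. Strict triangularity is preserved by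
multiplication by triangular maps on either side, which gives the ideal.
-/

open Submodule Set

/-- Topological nilpotence for the finite topology on `Module.End k V` (not to be confused with
the root-namespace `IsTopologicallyNilpotent` for topological rings). -/
def Module.End.IsTopologicallyNilpotent {k V : Type*} [CommRing k] [AddCommGroup V] [Module k V]
    (T : Module.End k V) : Prop :=
  ∀ v : V, ∃ m : ℕ, 0 < m ∧ (T ^ m) v = 0

namespace Module.Basis

variable {k V ι : Type*} [CommRing k] [AddCommGroup V] [Module k V]

theorem repr_apply_eq_zero_of_mem_span_image {b : Basis ι k V} {s : Set ι} {v : V}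
    (hv : v ∈ span k (b '' s)) {i : ι} (hi : i ∉ s) : b.repr v i = 0 :=
  Finsupp.notMem_support_iff.mp fun h => hi (b.mem_span_image.mp hv h)

variable [LinearOrder ι]

def IsTriangular (b : Basis ι k V) (T : Module.End k V) : Prop :=
  ∀ i, T (b i) ∈ span k (b '' Iic i)

def IsStrictlyTriangular (b : Basis ι k V) (T : Module.End k V) : Prop :=
  ∀ i, T (b i) ∈ span k (b '' Iio i)

variable {b : Basis ι k V} {S T : Module.End k V}

theorem IsTriangular.apply_mem_span_of_isLowerSet (hT : b.IsTriangular T) {s : Set ι}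
    (hs : IsLowerSet s) {v : V} (hv : v ∈ span k (b '' s)) : T v ∈ span k (b '' s) :=
  (map_span_le T _ _).mpr
    (forall_mem_image.mpr fun _ hj => span_mono (image_mono (hs.Iic_subset hj)) (hT _))
    (mem_map_of_mem hv)

theorem IsStrictlyTriangular.apply_mem_span_Iio (hT : b.IsStrictlyTriangular T) {i : ι} {v : V}
    (hv : v ∈ span k (b '' Iic i)) : T v ∈ span k (b '' Iio i) :=
  (map_span_le T _ _).mpr
    (forall_mem_image.mpr fun _ hj => span_mono (image_mono (Iio_subset_Iio hj)) (hT _))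
    (mem_map_of_mem hv)

theorem isTriangular_one : b.IsTriangular 1 :=
  fun _ => subset_span (mem_image_of_mem b (mem_Iic.mpr le_rfl))

theorem IsTriangular.mul (hS : b.IsTriangular S) (hT : b.IsTriangular T) :
    b.IsTriangular (S * T) :=
  fun i => hS.apply_mem_span_of_isLowerSet (isLowerSet_Iic i) (hT i)

theorem IsTriangular.pow (hT : b.IsTriangular T) (m : ℕ) : b.IsTriangular (T ^ m) := by
  induction m with
  | zero => exact isTriangular_one
  | succ m ih => rw [pow_succ']; exact hT.mul ih

theorem IsTriangular.mul_isStrictlyTriangular (hS : b.IsTriangular S)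
    (hT : b.IsStrictlyTriangular T) : b.IsStrictlyTriangular (S * T) :=
  fun i => hS.apply_mem_span_of_isLowerSet (isLowerSet_Iio i) (hT i)

theorem IsStrictlyTriangular.mul_isTriangular (hS : b.IsStrictlyTriangular S)
    (hT : b.IsTriangular T) : b.IsStrictlyTriangular (S * T) :=
  fun i => hS.apply_mem_span_Iio (hT i)

theorem isStrictlyTriangular_zero : b.IsStrictlyTriangular 0 :=
  fun _ => zero_mem _

theorem IsStrictlyTriangular.add (hS : b.IsStrictlyTriangular S)
    (hT : b.IsStrictlyTriangular T) : b.IsStrictlyTriangular (S + T) :=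
  fun i => add_mem (hS i) (hT i)

theorem IsStrictlyTriangular.neg (hT : b.IsStrictlyTriangular T) :
    b.IsStrictlyTriangular (-T) :=
  fun i => neg_mem (hT i)

theorem IsTriangular.repr_apply_of_mem (hT : b.IsTriangular T) {i : ι} {v : V}
    (hv : v ∈ span k (b '' Iic i)) : b.repr (T v) i = b.repr (T (b i)) i * b.repr v i := by
  refine LinearMap.eqOn_span' (f := b.coord i ∘ₗ T) (g := b.repr (T (b i)) i • b.coord i)
    ?_ hv
  rintro _ ⟨j, hj, rfl⟩
  rcases (mem_Iic.mp hj).lt_or_eq with hji | rfl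
  · have hTj : b.repr (T (b j)) i = 0 :=
      repr_apply_eq_zero_of_mem_span_image (hT j) (notMem_Iic.mpr hji)
    simp [hTj, hji.ne]
  · simp

theorem IsTriangular.repr_pow_apply_self (hT : b.IsTriangular T) (i : ι) (m : ℕ) :
    b.repr ((T ^ m) (b i)) i = b.repr (T (b i)) i ^ m := by
  induction m with
  | zero => simp
  | succ m ih =>
    rw [pow_succ', Module.End.mul_apply, hT.repr_apply_of_mem (hT.pow m i), ih, pow_succ']

theorem IsTriangular.isStrictlyTriangular [NoZeroDivisors k] (hT : b.IsTriangular T)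
    (hnil : T.IsTopologicallyNilpotent) : b.IsStrictlyTriangular T := by
  intro i
  obtain ⟨m, hm, hTm⟩ := hnil (b i)
  have hdiag : b.repr (T (b i)) i = 0 := by
    have h := hT.repr_pow_apply_self i m
    rw [hTm, map_zero, Finsupp.zero_apply] at h
    exact (pow_eq_zero_iff hm.ne').mp h.symm
  refine b.mem_span_image.mpr fun j hj => ?_
  refine (b.mem_span_image.mp (hT i) hj).lt_of_ne ?_
  rintro rfl
  exact Finsupp.mem_support_iff.mp hj hdiag

/-- Well-founded induction along the basis: `b i` is killed by a power of `T` once all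
`b j, j < i` are, since `T (b i)` lies in their span. -/
theorem IsStrictlyTriangular.isTopologicallyNilpotent [WellFoundedLT ι]
    (hT : b.IsStrictlyTriangular T) : T.IsTopologicallyNilpotent := by
  have hbasis : ∀ i, b i ∈ T.maxGenEigenspace 0 := by
    intro i
    induction i using WellFoundedLT.induction with
    | ind i ih =>
      have hTi : T (b i) ∈ T.maxGenEigenspace 0 :=
        span_le.mpr (image_subset_iff.mpr ih) (hT i)
      obtain ⟨m, hm⟩ := (T.mem_maxGenEigenspace 0 _).mp hTi
      exact (T.mem_maxGenEigenspace 0 _).mpr ⟨m + 1, by simpa [pow_succ] using hm⟩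
  intro v
  have hv : v ∈ T.maxGenEigenspace 0 :=
    span_le.mpr (range_subset_iff.mpr hbasis) (b.span_eq ▸ mem_top)
  obtain ⟨m, hm⟩ := (T.mem_maxGenEigenspace 0 _).mp hv
  exact ⟨m + 1, m.succ_pos, by simp_all [pow_succ']⟩

theorem IsTriangular.isTopologicallyNilpotent_iff [NoZeroDivisors k] [WellFoundedLT ι]
    (hT : b.IsTriangular T) : T.IsTopologicallyNilpotent ↔ b.IsStrictlyTriangular T :=
  ⟨hT.isStrictlyTriangular, IsStrictlyTriangular.isTopologicallyNilpotent⟩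

variable (b) in
def strictlyTriangularIdeal (R : Subring (Module.End k V))
    (htri : ∀ T ∈ R, b.IsTriangular T) : TwoSidedIdeal R :=
  .mk' {T | b.IsStrictlyTriangular T} isStrictlyTriangular_zero .add .neg
    (fun {x _} hy => (htri x x.2).mul_isStrictlyTriangular hy)
    (fun {_ y} hx => hx.mul_isTriangular (htri y y.2))

theorem mem_strictlyTriangularIdeal {R : Subring (Module.End k V)}
    {htri : ∀ T ∈ R, b.IsTriangular T} {T : R} :
    T ∈ b.strictlyTriangularIdeal R htri ↔ b.IsStrictlyTriangular T :=
  TwoSidedIdeal.mem_mk' ..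

end Module.Basis

theorem stmt_9_general {k V : Type*} [Field k] [AddCommGroup V] [Module k V]
    (R : Subring (Module.End k V))
    {ι : Type*} [LinearOrder ι] [WellFoundedLT ι] (b : Module.Basis ι k V)
    (htri : ∀ T ∈ R, ∀ i : ι, T (b i) ∈ Submodule.span k (⇑b '' {j | j ≤ i})) :
    (∀ T ∈ R, (∀ v : V, ∃ m : ℕ, 0 < m ∧ (T ^ m) v = 0) ↔
      (∀ i : ι, T (b i) ∈ Submodule.span k (⇑b '' {j | j < i}))) ∧
    ∃ I : TwoSidedIdeal R, ∀ T : R,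
      T ∈ I ↔ (∀ v : V, ∃ m : ℕ, 0 < m ∧ ((T : Module.End k V) ^ m) v = 0) := by
  have hiff (T : Module.End k V) (hT : T ∈ R) :
      T.IsTopologicallyNilpotent ↔ b.IsStrictlyTriangular T :=
    Module.Basis.IsTriangular.isTopologicallyNilpotent_iff (htri T hT)
  exact ⟨hiff, b.strictlyTriangularIdeal R htri,
    fun T => Module.Basis.mem_strictlyTriangularIdeal.trans (hiff T T.2).symm⟩

/-- if `R` is a unital subring of `End_k(V)` triangular with respect to a
well-ordered basis `(B, ≤)`, then the topologically nilpotent elements of `R` are exactly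
the elements of `R` that are strictly triangular with respect to `(B, ≤)`, and they form a
two-sided ideal of `R`. -/
theorem stmt_9 {k V : Type*} [Field k] [AddCommGroup V] [Module k V] [Nontrivial V]
    (R : Subring (Module.End k V))
    {ι : Type*} [LinearOrder ι] [WellFoundedLT ι] (b : Module.Basis ι k V)
    (htri : ∀ T ∈ R, ∀ i : ι, T (b i) ∈ Submodule.span k (⇑b '' {j | j ≤ i})) :
    (∀ T ∈ R, (∀ v : V, ∃ m : ℕ, 0 < m ∧ (T ^ m) v = 0) ↔
      (∀ i : ι, T (b i) ∈ Submodule.span k (⇑b '' {j | j < i}))) ∧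
    ∃ I : TwoSidedIdeal R, ∀ T : R,
      T ∈ I ↔ (∀ v : V, ∃ m : ℕ, 0 < m ∧ ((T : Module.End k V) ^ m) v = 0) :=
  stmt_9_general R b htri
end

section
/- Let k be a field, n a positive integer, and R a unital k-subalgebra of the matrix ring M_n(k). Then R is triangularizable if and only if R/rad(R) is isomorphic as a k-algebra to k^m for some positive integer m; moreover, in that case m ≤ n. -/
/-!
In a triangularizing basis every `T ∈ R` is upper triangular, so reading off the diagonal is an
algebra map `D : R → kⁿ`. Its kernel consists of strictly upper triangular, hence nilpotent,
elements; a two-sided ideal of nilpotents lies in `rad R`, and `rad R` is killed by every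
character `R → k`, so `ker D = rad R`. The image of `D` is `k^m`, `m` the number of distinct
diagonal characters, by Dedekind's independence of characters; and `m ≤ n` because `k^m ≅ R/rad R`
embeds in `kⁿ` through `D`.

Conversely, if `R/rad R ≅ k^m`, every nonzero finite-dimensional `R`-module `N` contains a common
eigenvector: a simple submodule is killed by `rad R`, so `R` acts on it through `k^m`, and one of
the lifts of the standard idempotents of `k^m` does not kill it. Applied to `N = kⁿ/U` for the
span `U` of a partial flag, this extends the flag one step at a time.
-/

open Module Submodule

namespace Matrix

variable {ι R : Type*} [Fintype ι] [LinearOrder ι]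

theorem IsUpperTriangular.diag_mul [NonUnitalNonAssocSemiring R] {M N : Matrix ι ι R}
    (hM : M.IsUpperTriangular) (hN : N.IsUpperTriangular) : (M * N).diag = M.diag * N.diag := by
  funext i
  rw [diag_apply, mul_apply, Finset.sum_eq_single i (fun j _ hji => ?_) (by simp)]
  · rfl
  rcases hji.lt_or_gt with hj | hj
  · rw [hM hj, zero_mul]
  · rw [hN hj, mul_zero]

theorem IsUpperTriangular.isNilpotent [CommRing R] [DecidableEq ι] {M : Matrix ι ι R}
    (hM : M.IsUpperTriangular) (hdiag : M.diag = 0) : IsNilpotent M := by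
  refine ⟨Fintype.card ι, ?_⟩
  have := M.aeval_self_charpoly
  simpa [M.charpoly_of_isUpperTriangular hM, ← diag_apply, hdiag] using this

instance faithfulSMul_mulVec [DecidableEq ι] [Semiring R] :
    FaithfulSMul (Matrix ι ι R) (ι → R) :=
  ⟨ext_iff_smul.2⟩

end Matrix

theorem Ring.mem_jacobson_of_forall_isNilpotent_mul {R : Type*} [Ring R] {a : R}
    (h : ∀ y, IsNilpotent (y * a)) : a ∈ Ring.jacobson R := by
  rw [← Ideal.jacobson_bot, Ideal.mem_jacobson_iff]
  intro y
  obtain ⟨u, hu⟩ := (h y).isUnit_add_one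
  refine ⟨↑u⁻¹, ?_⟩
  rw [mul_assoc, ← mul_add_one, ← hu, Units.inv_mul, sub_self]
  exact zero_mem _

theorem Module.exists_ne_zero_forall_jacobson_smul_eq_zero (R N : Type*) [Ring R]
    [AddCommGroup N] [Module R N] [IsArtinian R N] [Nontrivial N] :
    ∃ w : N, w ≠ 0 ∧ ∀ a ∈ Ring.jacobson R, a • w = 0 := by
  obtain ⟨S, hS, -⟩ := (eq_bot_or_exists_atom_le (⊤ : Submodule R N)).resolve_left top_ne_bot
  have := isSimpleModule_iff_isAtom.2 hS
  obtain ⟨w, hwS, hw0⟩ := exists_mem_ne_zero_of_ne_bot hS.1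
  refine ⟨w, hw0, fun a ha => ?_⟩
  exact congrArg Subtype.val
    (Module.mem_annihilator.1 (IsSemisimpleModule.jacobson_le_annihilator R S ha) ⟨w, hwS⟩)

theorem LinearMap.finrank_le_of_surjective_of_ker_eq {k V W U : Type*} [Field k]
    [AddCommGroup V] [Module k V] [AddCommGroup W] [Module k W] [AddCommGroup U] [Module k U]
    [FiniteDimensional k U] (f : V →ₗ[k] W) (g : V →ₗ[k] U) (hf : Function.Surjective f)
    (h : ker f = ker g) : finrank k W ≤ finrank k U :=
  ((f.quotKerEquivOfSurjective hf).symm.trans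
    ((quotEquivOfEq _ _ h).trans g.quotKerEquivRange)).finrank_eq.trans_le (Submodule.finrank_le _)

section Characters

variable {k A : Type*} [Field k] [Ring A] [Algebra k A]

theorem Ring.jacobson_le_ker_algHom (χ : A →ₐ[k] k) : Ring.jacobson A ≤ RingHom.ker χ :=
  have := RingHom.ker_isMaximal_of_surjective χ fun c => ⟨algebraMap k A c, χ.commutes c⟩
  Ring.jacobson_le_of_isMaximal _

theorem Ring.jacobson_le_ker_algHom_pi {ι : Type*} (D : A →ₐ[k] (ι → k)) :
    Ring.jacobson A ≤ RingHom.ker D := fun _ ha =>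
  funext fun i => Ring.jacobson_le_ker_algHom ((Pi.evalAlgHom k (fun _ => k) i).comp D) ha

theorem AlgHom.pi_surjective_of_injective {ι : Type*} [Fintype ι] {χ : ι → A →ₐ[k] k}
    (hχ : Function.Injective χ) : Function.Surjective (AlgHom.pi χ) := by
  classical
  let Φ := (AlgHom.pi χ).toLinearMap
  suffices LinearMap.range Φ = ⊤ from LinearMap.range_eq_top.1 this
  by_contra hne
  -- A nonzero functional `g` vanishing on the range is a linear relation among the `χ i`.
  obtain ⟨g, hg0, hg⟩ := exists_dual_map_eq_bot_of_lt_top (lt_top_iff_ne_top.2 hne) inferInstance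
  let c i := g fun j => if i = j then 1 else 0
  have hrel : ∑ i, c i • ((χ i : A →* k) : A → k) = 0 := funext fun a => by
    have : g (Φ a) = 0 := (mem_bot k).1 (hg ▸ mem_map_of_mem (LinearMap.mem_range_self Φ a))
    rw [LinearMap.pi_apply_eq_sum_univ g] at this
    simpa [mul_comm, Φ] using this
  have hc := Fintype.linearIndependent_iff.1 ((linearIndependent_monoidHom A k).comp _
    fun i j h => hχ (AlgHom.ext fun a => DFunLike.congr_fun h a)) _ hrel
  refine hg0 (LinearMap.ext fun y => ?_)
  simp only [c] at hc
  simp [LinearMap.pi_apply_eq_sum_univ g y, hc]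

theorem AlgHom.exists_surjective_pi_fin_ker_eq {ι : Type*} [Fintype ι] [Nonempty ι]
    (D : A →ₐ[k] (ι → k)) : ∃ m, 0 < m ∧ ∃ φ : A →ₐ[k] (Fin m → k),
      Function.Surjective φ ∧ RingHom.ker φ = RingHom.ker D := by
  classical
  let ψ i := (Pi.evalAlgHom k (fun _ => k) i).comp D
  let s := Finset.univ.image ψ
  let χ j := (s.equivFin.symm j : A →ₐ[k] k)
  have hχ : Function.Injective χ := fun i j h => s.equivFin.symm.injective (Subtype.ext h)
  refine ⟨s.card, Finset.card_pos.2 (Finset.univ_nonempty.image ψ), AlgHom.pi χ,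
    AlgHom.pi_surjective_of_injective hχ, ?_⟩
  ext a
  simp only [RingHom.mem_ker, funext_iff, AlgHom.pi_apply, Pi.zero_apply]
  constructor
  · intro h i
    simpa [χ, ψ] using h (s.equivFin ⟨ψ i, Finset.mem_image_of_mem ψ (Finset.mem_univ i)⟩)
  · intro h j
    obtain ⟨i, -, hi⟩ := Finset.mem_image.1 (s.equivFin.symm j).2
    simp only [χ, ← hi]
    exact h i

namespace AlgHom

variable {ι : Type*} [Fintype ι] [LinearOrder ι] [DecidableEq ι]
  (ρ : A →ₐ[k] Matrix ι ι k) (hρ : ∀ a, (ρ a).IsUpperTriangular)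

def diagOfIsUpperTriangular : A →ₐ[k] (ι → k) where
  toFun a := (ρ a).diag
  map_one' := by simp
  map_mul' a b := by simp [(hρ a).diag_mul (hρ b)]
  map_zero' := by simp
  map_add' a b := by simp
  commutes' c := by simp [Algebra.algebraMap_eq_smul_one]

theorem ker_diagOfIsUpperTriangular (hρinj : Function.Injective ρ) :
    RingHom.ker (diagOfIsUpperTriangular ρ hρ) = Ring.jacobson A := by
  refine le_antisymm (fun a ha => Ring.mem_jacobson_of_forall_isNilpotent_mul fun y => ?_)
    (Ring.jacobson_le_ker_algHom_pi _)
  refine (IsNilpotent.map_iff hρinj).1 ((hρ _).isNilpotent ?_)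
  have : diagOfIsUpperTriangular ρ hρ (y * a) = 0 := by rw [map_mul, ha, mul_zero]
  exact this

end AlgHom

end Characters

section Triangularization

variable {k A M : Type*} [Field k] [Ring A] [Algebra k A] [AddCommGroup M] [Module k M]
  [Module A M] [IsScalarTower k A M]

def Module.Basis.Triangularizes (A : Type*) [SMul A M] {ι : Type*} [Preorder ι]
    (b : Basis ι k M) : Prop :=
  ∀ (a : A) i, a • b i ∈ span k (b '' Set.Iic i)

namespace Module.Basis.Triangularizes

variable {ι : Type*} [Fintype ι] [LinearOrder ι] [DecidableEq ι] {b : Basis ι k M}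

theorem isUpperTriangular (hb : b.Triangularizes A) (a : A) :
    (LinearMap.toMatrix b b (Algebra.lsmul k k M a)).IsUpperTriangular := fun i j hji => by
  rw [LinearMap.toMatrix_apply, Algebra.lsmul_apply]
  by_contra h
  exact (not_le.2 hji) (b.mem_span_image.1 (hb a j) (Finsupp.mem_support_iff.2 h))

theorem exists_ker_eq_jacobson [FaithfulSMul A M] (hb : b.Triangularizes A) :
    ∃ D : A →ₐ[k] (ι → k), RingHom.ker D = Ring.jacobson A :=
  ⟨_, AlgHom.ker_diagOfIsUpperTriangular ((LinearMap.toMatrixAlgEquiv b).toAlgHom.comp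
    (Algebra.lsmul k k M)) hb.isUpperTriangular <| (LinearMap.toMatrixAlgEquiv b).injective.comp
      fun _ _ h => FaithfulSMul.eq_of_smul_eq_smul (LinearMap.congr_fun h)⟩

end Module.Basis.Triangularizes

theorem Module.exists_common_eigenvector_of_ker_le_jacobson [IsArtinian A M] [Nontrivial M]
    {ι : Type*} [Fintype ι] (φ : A →ₐ[k] (ι → k)) (hφ : Function.Surjective φ)
    (hker : RingHom.ker φ ≤ Ring.jacobson A) :
    ∃ v : M, v ≠ 0 ∧ ∃ i, ∀ a : A, a • v = φ a i • v := by
  classical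
  obtain ⟨w, hw0, hw⟩ := exists_ne_zero_forall_jacobson_smul_eq_zero A M
  have hkill : ∀ a, φ a = 0 → a • w = 0 := fun a ha => hw a (hker ha)
  choose e he using fun i => hφ (Pi.single i 1)
  have hsum : ∑ i, e i • w = w := by
    have := hkill (∑ i, e i - 1) (by simp [he, Finset.univ_sum_single, Pi.one_def])
    rwa [sub_smul, one_smul, Finset.sum_smul, sub_eq_zero] at this
  obtain ⟨i, -, hi⟩ := Finset.exists_ne_zero_of_sum_ne_zero (hsum.symm ▸ hw0)
  refine ⟨e i • w, hi, i, fun a => ?_⟩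
  have := hkill (a * e i - φ a i • e i) <| funext fun j => by
    by_cases hj : j = i <;> simp [he, hj]
  rwa [sub_smul, sub_eq_zero, mul_smul, smul_assoc] at this

theorem Module.exists_linearIndependent_triangular [FiniteDimensional k M]
    (heig : ∀ U : Submodule A M, U ≠ ⊤ → ∃ v ∉ U, ∃ c : A → k, ∀ a, a • v - c a • v ∈ U) :
    ∀ d ≤ finrank k M, ∃ f : Fin d → M,
      LinearIndependent k f ∧ ∀ (a : A) i, a • f i ∈ span k (f '' Set.Iic i)
  | 0, _ => ⟨Fin.elim0, linearIndependent_empty_type, fun _ i => i.elim0⟩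
  | d + 1, hd => by
    obtain ⟨f, hf, htri⟩ := exists_linearIndependent_triangular heig d (by omega)
    have hstable (a : A) :
        span k (Set.range f) ≤ (span k (Set.range f)).comap (Algebra.lsmul k k M a) :=
      span_le.2 <| Set.range_subset_iff.2 fun j => span_mono (Set.image_subset_range _ _) (htri a j)
    let U : Submodule A M := { span k (Set.range f) with smul_mem' := fun a _ hx => hstable a hx }
    have hU : U ≠ ⊤ := fun h => by
      have htop : span k (Set.range f) = ⊤ := eq_top_iff.2 fun x _ => (h ▸ mem_top : x ∈ U)
      have := finrank_span_eq_card hf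
      rw [htop, finrank_top, Fintype.card_fin] at this
      omega
    obtain ⟨v, hvU, c, hv⟩ := heig U hU
    have hsub (j : Fin d) : f '' Set.Iic j ⊆ Fin.snoc f v '' Set.Iic j.castSucc := by
      rintro _ ⟨l, hl, rfl⟩
      exact ⟨l.castSucc, Fin.castSucc_le_castSucc_iff.2 hl, Fin.snoc_castSucc ..⟩
    refine ⟨Fin.snoc f v, linearIndependent_finSnoc.2 ⟨hf, hvU⟩, fun a i => ?_⟩
    induction i using Fin.lastCases with
    | cast j =>
      rw [Fin.snoc_castSucc]
      exact span_mono (hsub j) (htri a j)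
    | last =>
      have hrange : Set.range f ⊆ Fin.snoc f v '' Set.Iic (Fin.last d) := by
        rintro _ ⟨l, rfl⟩
        exact ⟨l.castSucc, Fin.le_last _, Fin.snoc_castSucc ..⟩
      rw [Fin.snoc_last, ← sub_add_cancel (a • v) (c a • v)]
      refine add_mem (span_mono hrange (hv a)) (smul_mem _ _ (subset_span ?_))
      exact ⟨Fin.last d, Set.self_mem_Iic, Fin.snoc_last ..⟩

theorem Module.exists_basis_triangularizes_of_eigenvectors_mod [FiniteDimensional k M]
    (heig : ∀ U : Submodule A M, U ≠ ⊤ → ∃ v ∉ U, ∃ c : A → k, ∀ a, a • v - c a • v ∈ U)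
    {n : ℕ} (hn : finrank k M = n) : ∃ b : Basis (Fin n) k M, b.Triangularizes A := by
  subst hn
  obtain ⟨f, hf, htri⟩ := exists_linearIndependent_triangular heig _ le_rfl
  exact ⟨basisOfLinearIndependentOfCardEqFinrank' f hf (Fintype.card_fin _),
    by simpa [Basis.Triangularizes] using htri⟩

theorem Module.exists_basis_triangularizes [FiniteDimensional k M] {ι : Type*} [Fintype ι]
    (φ : A →ₐ[k] (ι → k)) (hφ : Function.Surjective φ) (hker : RingHom.ker φ ≤ Ring.jacobson A)
    {n : ℕ} (hn : finrank k M = n) : ∃ b : Basis (Fin n) k M, b.Triangularizes A := by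
  refine exists_basis_triangularizes_of_eigenvectors_mod (fun U hU => ?_) hn
  have := Submodule.Quotient.nontrivial_iff.2 hU
  have : IsArtinian A (M ⧸ U) := isArtinian_of_tower k inferInstance
  obtain ⟨q, hq, i, hi⟩ := exists_common_eigenvector_of_ker_le_jacobson (M := M ⧸ U) φ hφ hker
  obtain ⟨v, rfl⟩ := U.mkQ_surjective q
  refine ⟨v, fun hv => hq ((Quotient.mk_eq_zero U).2 hv), fun a => φ a i, fun a => ?_⟩
  rw [← Quotient.mk_eq_zero, Quotient.mk_sub, Quotient.mk_smul, Quotient.mk_smul]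
  exact sub_eq_zero.2 (hi a)

end Triangularization

/-- McCoy-type theorem: a unital `k`-subalgebra `R` of `M_n(k)` is
triangularizable iff `R/rad(R) ≅ k^m` as `k`-algebras for some positive integer `m`
(witnessed by a surjective `k`-algebra homomorphism `R → k^m` whose kernel is the
Jacobson radical `rad(R) = Ideal.jacobson ⊥`, the intersection of the maximal left
ideals); moreover, in that case `m ≤ n`. -/
theorem stmt_18 {k : Type*} [Field k] {n : ℕ} (hn : 0 < n)
    (R : Subalgebra k (Matrix (Fin n) (Fin n) k)) :
    ((∃ b : Module.Basis (Fin n) k (Fin n → k), ∀ T ∈ R, ∀ i : Fin n,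
        Matrix.toLin' T (b i) ∈ Submodule.span k (⇑b '' {j | j ≤ i})) ↔
      ∃ m : ℕ, 0 < m ∧ ∃ φ : R →ₐ[k] (Fin m → k), Function.Surjective ⇑φ ∧
        ∀ x : R, φ x = 0 ↔ x ∈ Ideal.jacobson (⊥ : Ideal R)) ∧
    (∀ m : ℕ, 0 < m →
      (∃ φ : R →ₐ[k] (Fin m → k), Function.Surjective ⇑φ ∧
        ∀ x : R, φ x = 0 ↔ x ∈ Ideal.jacobson (⊥ : Ideal R)) → m ≤ n) := by
  have hdim : finrank k (Fin n → k) = n := finrank_fin_fun k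
  have htri (b : Basis (Fin n) k (Fin n → k)) :
      (∀ T ∈ R, ∀ i, Matrix.toLin' T (b i) ∈ span k (b '' {j | j ≤ i})) ↔ b.Triangularizes R :=
    ⟨fun h x i => h x x.2 i, fun h T hT i => h ⟨T, hT⟩ i⟩
  have hrad {m : ℕ} (φ : R →ₐ[k] (Fin m → k)) :
      (∀ x, φ x = 0 ↔ x ∈ Ideal.jacobson ⊥) ↔ RingHom.ker φ = Ring.jacobson R := by
    rw [Ideal.jacobson_bot, SetLike.ext_iff]
    rfl
  have : Nonempty (Fin n) := ⟨⟨0, hn⟩⟩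
  refine ⟨⟨fun ⟨b, hb⟩ => ?_, fun ⟨m, _, φ, hφ, hφJ⟩ => ?_⟩, fun m _ ⟨φ, hφ, hφJ⟩ => ?_⟩
  · obtain ⟨D, hD⟩ := ((htri b).1 hb).exists_ker_eq_jacobson (k := k) (A := R)
    obtain ⟨m, hm, φ, hφ, hφD⟩ := D.exists_surjective_pi_fin_ker_eq
    exact ⟨m, hm, φ, hφ, (hrad φ).2 (hφD.trans hD)⟩
  · obtain ⟨b, hb⟩ := exists_basis_triangularizes φ hφ ((hrad φ).1 hφJ).le hdim
    exact ⟨b, (htri b).2 hb⟩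
  · obtain ⟨b, hb⟩ := exists_basis_triangularizes φ hφ ((hrad φ).1 hφJ).le hdim
    obtain ⟨D, hD⟩ := hb.exists_ker_eq_jacobson
    have hker : LinearMap.ker φ.toLinearMap = LinearMap.ker D.toLinearMap := by
      ext x
      exact SetLike.ext_iff.1 (((hrad φ).1 hφJ).trans hD.symm) x
    simpa [hdim] using LinearMap.finrank_le_of_surjective_of_ker_eq _ _ hφ hker
end
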